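/- arXiv:2410.08754 — 4 statements merged into one kernel-verified Lean document; each statement's English description precedes it below -/
import Mathlib

section
/- Let Q₂(ℝ₊) be the cone of nondecreasing right-continuous paths q : [0,1) → ℝ₊ in L²([0,1)), with dual cone Q₂(ℝ₊)* = { p ∈ L²([0,1)) : ⟨p,q⟩ ≥ 0 for all q ∈ Q₂(ℝ₊) }. Let χ : ℝ₊ → ℝ be Lipschitz. Then the functional X(q) = ∫₀¹ χ(q(u)) du on Q₂(ℝ₊) is nondecreasing with respect to the order induced by Q₂(ℝ₊)* (meaning q' − q ∈ Q₂(ℝ₊)* implies X(q) ≤ X(q')) if and only if χ is nondecreasing and convex. -/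
/-!
Nonnegative constants and the step paths `u ↦ if u < s then x else y` (`0 ≤ x ≤ y`) lie in
`Q₂(ℝ₊)`, and such a step path dominates its mean `s x + (1 - s) y` in the dual-cone order: pairing
the difference with a nondecreasing `r ≥ 0` gives `(y - x) (s ∫_s^1 r - (1 - s) ∫_0^s r) ≥ 0`.
Comparing constants gives monotonicity of `χ`; comparing a step path with its mean gives convexity.

Conversely, for `χ` convex and nondecreasing, the forward slope `φ_ε z = (χ (z + ε) - χ z) / ε` is
continuous, nonnegative, nondecreasing and bounded by the Lipschitz constant `K`, so `φ_ε ∘ q` lies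
in `Q₂(ℝ₊)`; and `φ_ε` is a subgradient up to an error `K ε`:
`χ x + (y - x) φ_ε x ≤ χ y + K ε`. Integrating this at `x = q u`, `y = q' u` and using that
`q' - q` pairs nonnegatively with `φ_ε ∘ q` gives `X q ≤ X q' + K ε` for every `ε > 0`.
-/

noncomputable section

open MeasureTheory Set
open scoped NNReal

/-- Lebesgue measure restricted to `[0,1)`. -/
def lebI : Measure ℝ := volume.restrict (Ico (0:ℝ) 1)

/-- The cone `Q₂(ℝ₊)` of nondecreasing, nonnegative, right-continuous paths
`q : [0,1) → ℝ₊` belonging to `L²([0,1))`. -/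
def Qcone : Set (ℝ → ℝ) :=
  {q | MonotoneOn q (Ico (0:ℝ) 1) ∧ (∀ u ∈ Ico (0:ℝ) 1, 0 ≤ q u) ∧
    (∀ u ∈ Ico (0:ℝ) 1, ContinuousWithinAt q (Ici u) u) ∧
    MemLp q 2 lebI}

/-- Membership in the dual cone `Q₂(ℝ₊)*`: nonnegative `L²`-pairing against
every element of `Q₂(ℝ₊)`. -/
def inDualCone (p : ℝ → ℝ) : Prop :=
  ∀ q ∈ Qcone, 0 ≤ ∫ u in Ico (0:ℝ) 1, p u * q u

theorem LipschitzWith.abs_slope_le {g : ℝ → ℝ} {K : ℝ≥0} (hg : LipschitzWith K g) (a b : ℝ) :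
    |slope g a b| ≤ K := by
  rw [slope_def_field, abs_div, ← Real.dist_eq, ← Real.dist_eq]
  exact div_le_of_le_mul₀ dist_nonneg K.coe_nonneg (hg.dist_le_mul b a)

theorem LipschitzWith.integrable_comp {α E F : Type*} [MeasurableSpace α] {μ : Measure α}
    [IsFiniteMeasure μ] [NormedAddCommGroup E] [NormedAddCommGroup F] {g : E → F} {K : ℝ≥0}
    (hg : LipschitzWith K g) {f : α → E} (hf : Integrable f μ) :
    Integrable (fun x => g (f x)) μ := by
  refine ((integrable_const ‖g 0‖).add (hf.norm.const_mul K)).mono'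
    (hg.continuous.comp_aestronglyMeasurable hf.1) (ae_of_all _ fun x => ?_)
  have := hg.norm_sub_le (f x) 0
  rw [sub_zero] at this
  simp only [Pi.add_apply]
  linarith [norm_sub_norm_le (g (f x)) (g 0)]

theorem continuous_slope_add {g : ℝ → ℝ} (hg : Continuous g) (ε : ℝ) :
    Continuous fun z => slope g z (z + ε) := by
  simp only [slope_def_field, add_sub_cancel_left]
  fun_prop

theorem ConvexOn.monotoneOn_slope_add {g : ℝ → ℝ} {a ε : ℝ} (hg : ConvexOn ℝ (Ici a) g)
    (hε : 0 < ε) : MonotoneOn (fun z => slope g z (z + ε)) (Ici a) := by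
  intro x hx y hy hxy
  have hxε : x + ε ∈ Ici a := le_add_of_le_of_nonneg hx hε.le
  have hyε : y + ε ∈ Ici a := le_add_of_le_of_nonneg hy hε.le
  calc slope g x (x + ε) ≤ slope g x (y + ε) :=
        hg.slope_mono hx ⟨hxε, by simp [hε.ne']⟩ ⟨hyε, by simp; linarith⟩ (by linarith)
    _ = slope g (y + ε) x := slope_comm _ _ _
    _ ≤ slope g (y + ε) y :=
        hg.slope_mono hyε ⟨hx, by simp; linarith⟩ ⟨hy, by simp [hε.ne']⟩ hxy
    _ = slope g y (y + ε) := slope_comm _ _ _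

theorem ConvexOn.add_mul_slope_add_le {g : ℝ → ℝ} {K : ℝ≥0} {a ε x y : ℝ}
    (hc : ConvexOn ℝ (Ici a) g) (hm : MonotoneOn g (Ici a)) (hg : LipschitzWith K g)
    (hε : 0 < ε) (hx : x ∈ Ici a) (hy : y ∈ Ici a) :
    g x + (y - x) * slope g x (x + ε) ≤ g y + K * ε := by
  have hxε : x + ε ∈ Ici a := le_add_of_le_of_nonneg hx hε.le
  have hxε_ne : x + ε ∈ Ici a \ {x} := ⟨hxε, by simp [hε.ne']⟩
  have hchord : (y - x) * slope g x y = g y - g x := by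
    simpa using sub_smul_slope g x y
  have hKε : 0 ≤ (K : ℝ) * ε := mul_nonneg K.coe_nonneg hε.le
  rcases lt_or_ge y x with hyx | hxy
  · have hslope : slope g x y ≤ slope g x (x + ε) :=
      hc.slope_mono hx ⟨hy, by simp [hyx.ne]⟩ hxε_ne (by linarith)
    nlinarith [mul_le_mul_of_nonpos_left hslope (sub_nonpos.2 hyx.le)]
  rcases le_or_gt (x + ε) y with hεy | hyε
  · have hslope : slope g x (x + ε) ≤ slope g x y :=
      hc.slope_mono hx hxε_ne ⟨hy, by simp; linarith⟩ hεy
    nlinarith [mul_le_mul_of_nonneg_left hslope (sub_nonneg.2 hxy)]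
  · have hpos : 0 ≤ slope g x (x + ε) := hm.slope_nonneg hx hxε
    have hK : slope g x (x + ε) ≤ K := (abs_le.1 (hg.abs_slope_le _ _)).2
    have hgxy := hm hx hy hxy
    nlinarith [mul_le_mul_of_nonneg_right hyε.le hpos, mul_le_mul_of_nonneg_left hK hε.le]

instance : IsFiniteMeasure lebI := by
  unfold lebI
  infer_instance

theorem integrableOn_of_mem_Qcone {q : ℝ → ℝ} (hq : q ∈ Qcone) : IntegrableOn q (Ico 0 1) :=
  (hq.2.2.2 : MemLp q 2 (volume.restrict (Ico 0 1))).integrable one_le_two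

theorem const_mem_Qcone {c : ℝ} (hc : 0 ≤ c) : (fun _ => c) ∈ Qcone :=
  ⟨monotoneOn_const, fun _ _ => hc, fun _ _ => continuousWithinAt_const, memLp_const c⟩

theorem comp_mem_Qcone {f q : ℝ → ℝ} {C : ℝ} (hf : Continuous f) (hmono : MonotoneOn f (Ici 0))
    (hnonneg : ∀ z, 0 ≤ z → 0 ≤ f z) (hbdd : ∀ z, |f z| ≤ C) (hq : q ∈ Qcone) :
    (fun u => f (q u)) ∈ Qcone := by
  obtain ⟨hqm, hq0, hqrc, hqL2⟩ := hq
  refine ⟨fun u hu v hv huv => hmono (hq0 u hu) (hq0 v hv) (hqm hu hv huv),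
    fun u hu => hnonneg _ (hq0 u hu),
    fun u hu => hf.continuousAt.comp_continuousWithinAt (hqrc u hu), ?_⟩
  exact MemLp.of_bound (hf.comp_aestronglyMeasurable hqL2.1) C (ae_of_all _ fun u => hbdd _)

theorem inDualCone_const {c : ℝ} (hc : 0 ≤ c) : inDualCone fun _ => c :=
  fun _ hq => setIntegral_nonneg measurableSet_Ico fun u hu => mul_nonneg hc (hq.2.1 u hu)

def stepPath (x y s : ℝ) (u : ℝ) : ℝ := if u < s then x else y

theorem stepPath_mem_Qcone {x y s : ℝ} (hx : 0 ≤ x) (hxy : x ≤ y) : stepPath x y s ∈ Qcone := by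
  refine ⟨fun u _ v _ huv => ?_, fun u _ => ?_, fun u _ => ?_, ?_⟩
  · unfold stepPath
    split_ifs <;> linarith
  · unfold stepPath
    split_ifs <;> linarith
  · rcases lt_or_ge u s with hus | hsu
    · refine continuousWithinAt_const.congr_of_eventuallyEq ?_ (if_pos hus)
      filter_upwards [nhdsWithin_le_nhds (Iio_mem_nhds hus)] with v hv using if_pos hv
    · refine continuousWithinAt_const.congr_of_eventuallyEq ?_ (if_neg hsu.not_gt)
      filter_upwards [self_mem_nhdsWithin] with v (hv : u ≤ v) using if_neg (by linarith)
  · have hmeas : Measurable (stepPath x y s) :=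
      Measurable.ite measurableSet_Iio measurable_const measurable_const
    refine MemLp.of_bound hmeas.aestronglyMeasurable (max |x| |y|) (ae_of_all _ fun u => ?_)
    unfold stepPath
    split_ifs
    · exact le_max_left _ _
    · exact le_max_right _ _

theorem integral_stepPath_mul {x y s : ℝ} {r : ℝ → ℝ} (hs : s ∈ Icc (0:ℝ) 1)
    (hr : IntegrableOn r (Ico 0 1)) :
    ∫ u in Ico (0:ℝ) 1, stepPath x y s u * r u
      = x * (∫ u in Ico (0:ℝ) s, r u) + y * ∫ u in Ico s 1, r u := by
  have hleft : EqOn (fun u => stepPath x y s u * r u) (fun u => x * r u) (Ico 0 s) :=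
    fun u hu => by simp [stepPath, hu.2]
  have hright : EqOn (fun u => stepPath x y s u * r u) (fun u => y * r u) (Ico s 1) :=
    fun u hu => by simp [stepPath, not_lt.2 hu.1]
  have hrl : IntegrableOn r (Ico 0 s) := hr.mono_set (Ico_subset_Ico le_rfl hs.2)
  have hrr : IntegrableOn r (Ico s 1) := hr.mono_set (Ico_subset_Ico hs.1 le_rfl)
  rw [← Ico_union_Ico_eq_Ico hs.1 hs.2, setIntegral_union Ico_disjoint_Ico_same measurableSet_Ico
      (IntegrableOn.congr_fun (hrl.const_mul x) hleft.symm measurableSet_Ico)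
      (IntegrableOn.congr_fun (hrr.const_mul y) hright.symm measurableSet_Ico),
    setIntegral_congr_fun measurableSet_Ico hleft, setIntegral_congr_fun measurableSet_Ico hright,
    integral_const_mul, integral_const_mul]

theorem integral_stepPath {x y s : ℝ} (hs : s ∈ Icc (0:ℝ) 1) :
    ∫ u in Ico (0:ℝ) 1, stepPath x y s u = s * x + (1 - s) * y := by
  have := integral_stepPath_mul (x := x) (y := y) (r := fun _ => 1) hs
    (integrableOn_const measure_Ico_lt_top.ne)
  simp only [mul_one] at this
  rw [this, setIntegral_const, setIntegral_const, Real.volume_real_Ico_of_le hs.1,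
    Real.volume_real_Ico_of_le hs.2, smul_eq_mul, smul_eq_mul]
  ring

theorem stepPath_sub_mean_inDualCone {x y s : ℝ} (hxy : x ≤ y) (hs : s ∈ Ico (0:ℝ) 1) :
    inDualCone fun u => stepPath x y s u - (s * x + (1 - s) * y) := by
  intro r hr
  set c := s * x + (1 - s) * y
  have hsub : ∀ u, stepPath x y s u - c = stepPath (x - c) (y - c) s u := fun u => by
    unfold stepPath; split_ifs <;> rfl
  simp only [hsub]
  have hr1 : IntegrableOn r (Ico 0 1) := integrableOn_of_mem_Qcone hr
  have hconst : ∀ a b : ℝ, a ≤ b → ∫ _ in Ico a b, r s = (b - a) * r s := fun a b hab => by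
    rw [setIntegral_const, Real.volume_real_Ico_of_le hab, smul_eq_mul]
  have hleft : ∫ u in Ico 0 s, r u ≤ s * r s := by
    calc ∫ u in Ico 0 s, r u ≤ ∫ _ in Ico 0 s, r s :=
          setIntegral_mono_on (hr1.mono_set (Ico_subset_Ico le_rfl hs.2.le))
            (integrableOn_const measure_Ico_lt_top.ne) measurableSet_Ico
            fun u hu => hr.1 ⟨hu.1, hu.2.trans hs.2⟩ hs hu.2.le
      _ = s * r s := by rw [hconst 0 s hs.1, sub_zero]
  have hright : (1 - s) * r s ≤ ∫ u in Ico s 1, r u := by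
    calc (1 - s) * r s = ∫ _ in Ico s 1, r s := (hconst s 1 hs.2.le).symm
      _ ≤ ∫ u in Ico s 1, r u :=
          setIntegral_mono_on (integrableOn_const measure_Ico_lt_top.ne)
            (hr1.mono_set (Ico_subset_Ico hs.1 le_rfl)) measurableSet_Ico
            fun u hu => hr.1 hs ⟨hs.1.trans hu.1, hu.2⟩ hu.1
  rw [integral_stepPath_mul (Ico_subset_Icc_self hs) hr1]
  have hbalance : 0 ≤ s * (∫ u in Ico s 1, r u) - (1 - s) * ∫ u in Ico 0 s, r u := by
    nlinarith [mul_le_mul_of_nonneg_left hleft (sub_nonneg.2 hs.2.le),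
      mul_le_mul_of_nonneg_left hright hs.1]
  calc 0 ≤ (y - x) * (s * (∫ u in Ico s 1, r u) - (1 - s) * ∫ u in Ico 0 s, r u) :=
        mul_nonneg (sub_nonneg.2 hxy) hbalance
    _ = _ := by ring

def IntegralCompMonotone (χ : ℝ → ℝ) : Prop :=
  ∀ q ∈ Qcone, ∀ q' ∈ Qcone, inDualCone (fun u => q' u - q u) →
    (∫ u in Ico (0:ℝ) 1, χ (q u)) ≤ ∫ u in Ico (0:ℝ) 1, χ (q' u)

namespace IntegralCompMonotone

variable {χ : ℝ → ℝ}

theorem monotoneOn (H : IntegralCompMonotone χ) : MonotoneOn χ (Ici 0) := by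
  intro a ha b hb hab
  simpa using H _ (const_mem_Qcone ha) _ (const_mem_Qcone hb) (inDualCone_const (sub_nonneg.2 hab))

theorem convexOn (H : IntegralCompMonotone χ) : ConvexOn ℝ (Ici 0) χ := by
  refine LinearOrder.convexOn_of_lt (convex_Ici 0) fun x hx y hy hxy a b ha hb hab => ?_
  obtain rfl : b = 1 - a := by linarith
  have hs : a ∈ Ico (0:ℝ) 1 := ⟨ha.le, by linarith⟩
  have hχstep : ∀ u, χ (stepPath x y a u) = stepPath (χ x) (χ y) a u := fun u => by
    unfold stepPath; split_ifs <;> rfl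
  have key := H _ (const_mem_Qcone (convex_Ici 0 hx hy ha.le hb.le hab))
    _ (stepPath_mem_Qcone hx hxy.le) (stepPath_sub_mean_inDualCone hxy.le hs)
  simpa [hχstep, integral_stepPath (Ico_subset_Icc_self hs)] using key

end IntegralCompMonotone

section Backward

variable {g : ℝ → ℝ} {K : ℝ≥0} {q q' : ℝ → ℝ}

theorem integral_comp_le_add_of_inDualCone (hg : LipschitzWith K g)
    (hm : MonotoneOn g (Ici 0)) (hc : ConvexOn ℝ (Ici 0) g) (hq : q ∈ Qcone) (hq' : q' ∈ Qcone)
    (hdual : inDualCone fun u => q' u - q u) {ε : ℝ} (hε : 0 < ε) :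
    ∫ u in Ico (0:ℝ) 1, g (q u) ≤ (∫ u in Ico (0:ℝ) 1, g (q' u)) + K * ε := by
  set φ : ℝ → ℝ := fun z => slope g z (z + ε)
  have hφq : (fun u => φ (q u)) ∈ Qcone :=
    comp_mem_Qcone (continuous_slope_add hg.continuous ε) (hc.monotoneOn_slope_add hε)
      (fun z hz => hm.slope_nonneg hz (le_add_of_le_of_nonneg hz hε.le))
      (fun z => hg.abs_slope_le _ _) hq
  have hq1 := integrableOn_of_mem_Qcone hq
  have hq1' := integrableOn_of_mem_Qcone hq'
  have hgq : IntegrableOn (fun u => g (q u)) (Ico 0 1) := hg.integrable_comp hq1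
  have hgq' : IntegrableOn (fun u => g (q' u)) (Ico 0 1) := hg.integrable_comp hq1'
  have hpair : IntegrableOn (fun u => (q' u - q u) * φ (q u)) (Ico 0 1) :=
    (hq1'.sub hq1).mul_bdd (continuous_slope_add hg.continuous ε |>.comp_aestronglyMeasurable
      hq1.1) (ae_of_all _ fun u => hg.abs_slope_le _ _)
  have hconst : IntegrableOn (fun _ => (K : ℝ) * ε) (Ico (0:ℝ) 1) :=
    integrableOn_const measure_Ico_lt_top.ne
  calc ∫ u in Ico (0:ℝ) 1, g (q u)
      ≤ (∫ u in Ico (0:ℝ) 1, g (q u)) + ∫ u in Ico (0:ℝ) 1, (q' u - q u) * φ (q u) :=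
        le_add_of_nonneg_right (hdual _ hφq)
    _ = ∫ u in Ico (0:ℝ) 1, (g (q u) + (q' u - q u) * φ (q u)) := (integral_add hgq hpair).symm
    _ ≤ ∫ u in Ico (0:ℝ) 1, (g (q' u) + K * ε) :=
        setIntegral_mono_on (hgq.add hpair) (hgq'.add hconst) measurableSet_Ico fun u hu =>
          hc.add_mul_slope_add_le hm hg hε (hq.2.1 u hu) (hq'.2.1 u hu)
    _ = (∫ u in Ico (0:ℝ) 1, g (q' u)) + K * ε := by
        rw [integral_add hgq' hconst, setIntegral_const, Real.volume_real_Ico_of_le zero_le_one]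
        simp

theorem integral_comp_le_of_inDualCone (hg : LipschitzWith K g)
    (hm : MonotoneOn g (Ici 0)) (hc : ConvexOn ℝ (Ici 0) g) (hq : q ∈ Qcone) (hq' : q' ∈ Qcone)
    (hdual : inDualCone fun u => q' u - q u) :
    ∫ u in Ico (0:ℝ) 1, g (q u) ≤ ∫ u in Ico (0:ℝ) 1, g (q' u) := by
  refine le_of_forall_pos_le_add fun δ hδ => ?_
  have hK : (0 : ℝ) < K + 1 := by positivity
  calc ∫ u in Ico (0:ℝ) 1, g (q u)
      ≤ (∫ u in Ico (0:ℝ) 1, g (q' u)) + K * (δ / (K + 1)) :=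
        integral_comp_le_add_of_inDualCone hg hm hc hq hq' hdual (div_pos hδ hK)
    _ ≤ (∫ u in Ico (0:ℝ) 1, g (q' u)) + δ := by
        gcongr
        rw [mul_div_assoc', div_le_iff₀ hK]
        nlinarith

end Backward

theorem IntegralCompMonotone.of_monotoneOn_of_convexOn {χ : ℝ → ℝ} {K : ℝ≥0}
    (hχ : LipschitzOnWith K χ (Ici 0)) (hm : MonotoneOn χ (Ici 0)) (hc : ConvexOn ℝ (Ici 0) χ) :
    IntegralCompMonotone χ := by
  obtain ⟨g, hg, hχg⟩ := hχ.extend_real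
  intro q hq q' hq' hdual
  have hcongr : ∀ {p}, p ∈ Qcone → ∫ u in Ico (0:ℝ) 1, χ (p u) = ∫ u in Ico (0:ℝ) 1, g (p u) :=
    fun hp => setIntegral_congr_fun measurableSet_Ico fun u hu => hχg (hp.2.1 u hu)
  rw [hcongr hq, hcongr hq']
  exact integral_comp_le_of_inDualCone hg (hm.congr hχg) (hc.congr hχg) hq hq' hdual

/-- For Lipschitz `χ : ℝ₊ → ℝ`, the functional `X(q) = ∫₀¹ χ(q(u)) du` is
nondecreasing on `Q₂(ℝ₊)` for the order induced by the dual cone `Q₂(ℝ₊)*`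
if and only if `χ` is nondecreasing and convex. -/
theorem integral_comp_monotone_iff_monotone_convex
    (χ : ℝ → ℝ) (K : ℝ≥0) (hχ : LipschitzOnWith K χ (Ici 0)) :
    (∀ q ∈ Qcone, ∀ q' ∈ Qcone, inDualCone (fun u => q' u - q u) →
      (∫ u in Ico (0:ℝ) 1, χ (q u)) ≤ ∫ u in Ico (0:ℝ) 1, χ (q' u)) ↔
    (MonotoneOn χ (Ici 0) ∧ ConvexOn ℝ (Ici 0) χ) :=
  ⟨fun H : IntegralCompMonotone χ => ⟨H.monotoneOn, H.convexOn⟩,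
    fun ⟨hm, hc⟩ => IntegralCompMonotone.of_monotoneOn_of_convexOn hχ hm hc⟩
end
end

section
/- Let K be a compact subset of S^D_+ and let P↑(K) be the set of probability measures on K of the form Law(q(U)) where U is uniform on [0,1) and q : [0,1) → S^D_+ is nondecreasing (for the positive semidefinite order). Then P↑(K) is a closed (hence compact) subset of the space P(K) of Borel probability measures on K equipped with the Wasserstein-1 distance. -/
noncomputable section

open MeasureTheory Set Filter
open scoped ENNReal

/-- The space of real `D × D` matrices with the Frobenius inner product. -/
abbrev MatSp (D : ℕ) := EuclideanSpace ℝ (Fin D × Fin D)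

/-- The cone `S^D_+` of symmetric positive semidefinite `D × D` matrices. -/
def psdCone (D : ℕ) : Set (MatSp D) :=
  {x | (∀ i j, x (i, j) = x (j, i)) ∧
    ∀ v : Fin D → ℝ, 0 ≤ ∑ i, ∑ j, v i * x (i, j) * v j}

/-- Wasserstein-1 distance between measures, defined as the infimum over couplings of
the expected distance. -/
def W1 {α : Type*} [MeasurableSpace α] (c : α → α → ℝ) (μ ν : Measure α) : ℝ :=
  sInf {r : ℝ | ∃ π : Measure (α × α), IsProbabilityMeasure π ∧
    π.map Prod.fst = μ ∧ π.map Prod.snd = ν ∧ r = ∫ p, c p.1 p.2 ∂π}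

/-- `μ` is a Borel probability measure concentrated on `K`. -/
def probOn {α : Type*} [MeasurableSpace α] (K : Set α) (μ : Measure α) : Prop :=
  IsProbabilityMeasure μ ∧ μ Kᶜ = 0

/-- `μ` is a monotone measure: the law of `q(U)` for a nondecreasing path
`q : [0,1) → S^D_+` (for the positive semidefinite order) and `U` uniform on `[0,1)`. -/
def monoMeas (D : ℕ) (μ : Measure (MatSp D)) : Prop :=
  ∃ q : ℝ → MatSp D, Measurable q ∧ (∀ u ∈ Ico (0:ℝ) 1, q u ∈ psdCone D) ∧
    (∀ u ∈ Ico (0:ℝ) 1, ∀ v ∈ Ico (0:ℝ) 1, u ≤ v → q v - q u ∈ psdCone D) ∧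
    μ = Measure.map q (volume.restrict (Ico (0:ℝ) 1))

/-- The set `P↑(K)` of monotone probability measures on `K`. -/
def Pup (D : ℕ) (K : Set (MatSp D)) : Set (Measure (MatSp D)) :=
  {μ | probOn K μ ∧ monoMeas D μ}


open Topology Metric
open scoped NNReal

namespace PupAux

variable {D : ℕ}

/-- The quadratic form `vᵀ x v`. -/
def quadF (v : Fin D → ℝ) (x : MatSp D) : ℝ := ∑ i, ∑ j, v i * x (i, j) * v j

lemma quadF_nonneg {v : Fin D → ℝ} {x : MatSp D} (hx : x ∈ psdCone D) : 0 ≤ quadF v x := hx.2 v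

lemma quadF_sub (v : Fin D → ℝ) (x y : MatSp D) : quadF v (x - y) = quadF v x - quadF v y := by
  simp only [quadF, PiLp.sub_apply, ← Finset.sum_sub_distrib]
  congr 1; ext i; congr 1; ext j; ring

lemma continuous_quadF (v : Fin D → ℝ) : Continuous (quadF v) := by
  refine continuous_finset_sum _ fun i _ => continuous_finset_sum _ fun j _ => ?_
  exact (continuous_const.mul ((EuclideanSpace.proj ((i, j) : Fin D × Fin D)).continuous)).mul
    continuous_const

lemma isClosed_psdCone : IsClosed (psdCone D) := by
  have h1 : IsClosed {x : MatSp D | ∀ i j : Fin D, x (i, j) = x (j, i)} := by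
    have : {x : MatSp D | ∀ i j : Fin D, x (i, j) = x (j, i)} =
        ⋂ (i : Fin D) (j : Fin D), {x : MatSp D | x (i, j) = x (j, i)} := by
      ext x; simp [Set.mem_iInter]
    rw [this]
    refine isClosed_iInter fun i => isClosed_iInter fun j => isClosed_eq ?_ ?_
    · exact (EuclideanSpace.proj ((i, j) : Fin D × Fin D)).continuous
    · exact (EuclideanSpace.proj ((j, i) : Fin D × Fin D)).continuous
  have h2 : IsClosed {x : MatSp D | ∀ v : Fin D → ℝ, 0 ≤ quadF v x} := by
    have : {x : MatSp D | ∀ v : Fin D → ℝ, 0 ≤ quadF v x} =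
        ⋂ (v : Fin D → ℝ), {x : MatSp D | 0 ≤ quadF v x} := by
      ext x; simp [Set.mem_iInter]
    rw [this]
    exact isClosed_iInter fun v => isClosed_le continuous_const (continuous_quadF v)
  exact (h1.inter h2 : IsClosed _)

lemma zero_mem_psdCone : (0 : MatSp D) ∈ psdCone D := by
  constructor
  · intro i j; rfl
  · intro v; simp

lemma abs_apply_le_norm (x : MatSp D) (p : Fin D × Fin D) : |x p| ≤ ‖x‖ := by
  rw [EuclideanSpace.norm_eq]
  rw [← Real.sqrt_sq_eq_abs]
  apply Real.sqrt_le_sqrt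
  have : x p ^ 2 = ‖x p‖ ^ 2 := by rw [Real.norm_eq_abs, sq_abs]
  rw [this]
  exact Finset.single_le_sum (f := fun q => ‖x q‖ ^ 2) (fun q _ => sq_nonneg _)
    (Finset.mem_univ p)



lemma quadF_two (i j : Fin D) (s t : ℝ) (x : MatSp D) :
    quadF (fun l => (if l = i then s else 0) + (if l = j then t else 0)) x
      = s * s * x (i, i) + s * t * x (i, j) + t * s * x (j, i) + t * t * x (j, j) := by
  have key : ∀ (a b : Fin D) (c d : ℝ),
      (∑ l, ∑ m, (if l = a then c else 0) * x (l, m) * (if m = b then d else 0))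
        = c * d * x (a, b) := by
    intro a b c d
    simp [mul_ite, ite_mul, Finset.sum_ite_eq', mul_comm, mul_assoc, mul_left_comm]
  have expand : quadF (fun l => (if l = i then s else 0) + (if l = j then t else 0)) x
      = (∑ l, ∑ m, (if l = i then s else 0) * x (l, m) * (if m = i then s else 0))
      + (∑ l, ∑ m, (if l = i then s else 0) * x (l, m) * (if m = j then t else 0))
      + (∑ l, ∑ m, (if l = j then t else 0) * x (l, m) * (if m = i then s else 0))
      + (∑ l, ∑ m, (if l = j then t else 0) * x (l, m) * (if m = j then t else 0)) := by
    unfold quadF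
    rw [← Finset.sum_add_distrib, ← Finset.sum_add_distrib, ← Finset.sum_add_distrib]
    refine Finset.sum_congr rfl fun l _ => ?_
    rw [← Finset.sum_add_distrib, ← Finset.sum_add_distrib, ← Finset.sum_add_distrib]
    refine Finset.sum_congr rfl fun m _ => ?_
    ring
  rw [expand, key, key, key, key]

lemma psd_diag_nonneg {x : MatSp D} (hx : x ∈ psdCone D) (i : Fin D) : 0 ≤ x (i, i) := by
  have := hx.2 (fun l => (if l = i then (1:ℝ) else 0) + (if l = i then 0 else 0))
  have h2 := quadF_two i i 1 0 x
  unfold quadF at h2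
  rw [h2] at this
  linarith

lemma psd_abs_entry {x : MatSp D} (hx : x ∈ psdCone D) (i j : Fin D) :
    |x (i, j)| ≤ (x (i, i) + x (j, j)) / 2 := by
  have h1 := hx.2 (fun l => (if l = i then (1:ℝ) else 0) + (if l = j then 1 else 0))
  have h2 := hx.2 (fun l => (if l = i then (1:ℝ) else 0) + (if l = j then (-1) else 0))
  have e1 := quadF_two i j 1 1 x
  have e2 := quadF_two i j 1 (-1) x
  unfold quadF at e1 e2
  rw [e1] at h1; rw [e2] at h2
  have hs := hx.1 i j
  rw [abs_le]; constructor <;> nlinarith [hs]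

lemma psd_norm_le_trace {x : MatSp D} (hx : x ∈ psdCone D) :
    ‖x‖ ≤ (D : ℝ) * ∑ i, x (i, i) := by
  set T := ∑ i, x (i, i) with hT
  have hT0 : 0 ≤ T := Finset.sum_nonneg fun i _ => psd_diag_nonneg hx i
  have hdiag_le : ∀ i : Fin D, x (i, i) ≤ T := fun i =>
    Finset.single_le_sum (f := fun i => x (i, i)) (fun j _ => psd_diag_nonneg hx j)
      (Finset.mem_univ i)
  have hentry : ∀ p : Fin D × Fin D, |x p| ≤ T := by
    rintro ⟨i, j⟩
    calc |x (i, j)| ≤ (x (i, i) + x (j, j)) / 2 := psd_abs_entry hx i j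
      _ ≤ T := by have := hdiag_le i; have := hdiag_le j; linarith
  rw [EuclideanSpace.norm_eq]
  have hsum : (∑ p : Fin D × Fin D, ‖x p‖ ^ 2) ≤ (D : ℝ)^2 * T^2 := by
    calc (∑ p : Fin D × Fin D, ‖x p‖ ^ 2) ≤ ∑ _p : Fin D × Fin D, T^2 := by
          refine Finset.sum_le_sum fun p _ => ?_
          rw [Real.norm_eq_abs]
          have := hentry p
          nlinarith [abs_nonneg (x p)]
      _ = (D : ℝ)^2 * T^2 := by
          rw [Finset.sum_const, Finset.card_univ, Fintype.card_prod, Fintype.card_fin,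
            nsmul_eq_mul]
          push_cast
          ring
  calc Real.sqrt (∑ p : Fin D × Fin D, ‖x p‖ ^ 2) ≤ Real.sqrt ((D:ℝ)^2 * T^2) :=
        Real.sqrt_le_sqrt hsum
    _ = (D : ℝ) * T := by
        rw [show ((D:ℝ)^2 * T^2) = ((D:ℝ)*T)^2 by ring, Real.sqrt_sq (by positivity)]

lemma psd_trace_mono {x y : MatSp D} (hyx : y - x ∈ psdCone D) :
    (∑ i, x (i, i)) ≤ ∑ i, y (i, i) := by
  refine Finset.sum_le_sum fun i _ => ?_
  have := psd_diag_nonneg hyx i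
  rw [PiLp.sub_apply] at this
  linarith

lemma psd_norm_le_of_le {x y : MatSp D} (hx : x ∈ psdCone D) (hyx : y - x ∈ psdCone D) :
    ‖x‖ ≤ (D : ℝ) * (D : ℝ) * ‖y‖ := by
  calc ‖x‖ ≤ (D : ℝ) * ∑ i, x (i, i) := psd_norm_le_trace hx
    _ ≤ (D : ℝ) * ∑ i, y (i, i) := by
        refine mul_le_mul_of_nonneg_left (psd_trace_mono hyx) (by positivity)
    _ ≤ (D : ℝ) * ∑ _i : Fin D, ‖y‖ := by
        refine mul_le_mul_of_nonneg_left (Finset.sum_le_sum fun i _ => ?_) (by positivity)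
        exact (le_abs_self _).trans (abs_apply_le_norm y (i, i))
    _ = (D : ℝ) * (D : ℝ) * ‖y‖ := by rw [Finset.sum_const, Finset.card_univ]; simp; ring

lemma abs_quadF_le (v : Fin D → ℝ) (x : MatSp D) :
    |quadF v x| ≤ (∑ i, |v i|) * (∑ i, |v i|) * ‖x‖ := by
  calc |quadF v x| ≤ ∑ i, |∑ j, v i * x (i, j) * v j| := Finset.abs_sum_le_sum_abs _ _
    _ ≤ ∑ i, ∑ j, |v i * x (i, j) * v j| :=
        Finset.sum_le_sum fun i _ => Finset.abs_sum_le_sum_abs _ _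
    _ ≤ ∑ i, ∑ j, |v i| * ‖x‖ * |v j| := by
        refine Finset.sum_le_sum fun i _ => Finset.sum_le_sum fun j _ => ?_
        rw [abs_mul, abs_mul]
        exact mul_le_mul_of_nonneg_right
          (mul_le_mul_of_nonneg_left (abs_apply_le_norm x (i, j)) (abs_nonneg (v i)))
          (abs_nonneg (v j))
    _ = (∑ i, |v i|) * (∑ i, |v i|) * ‖x‖ := by
        rw [Finset.sum_mul_sum]
        rw [Finset.sum_mul]
        refine Finset.sum_congr rfl fun i _ => ?_
        rw [Finset.sum_mul]
        refine Finset.sum_congr rfl fun j _ => ?_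
        ring



/-- Right-limit regularization along rationals of `γ`, capped with `M`. -/
def rlim (γ : ℚ → ℝ) (M : ℝ) (u : ℝ) : ℝ :=
  sInf (insert M {x | ∃ t : ℚ, 0 ≤ (t:ℝ) ∧ u < (t:ℝ) ∧ (t:ℝ) < 1 ∧ x = γ t})

variable {γ : ℚ → ℝ} {M : ℝ}

lemma rlim_bddBelow (hγ0 : ∀ t : ℚ, 0 ≤ (t:ℝ) → (t:ℝ) < 1 → 0 ≤ γ t) (hM : 0 ≤ M) (u : ℝ) :
    BddBelow (insert M {x | ∃ t : ℚ, 0 ≤ (t:ℝ) ∧ u < (t:ℝ) ∧ (t:ℝ) < 1 ∧ x = γ t}) := by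
  refine ⟨0, ?_⟩
  rintro x (rfl | ⟨t, ht0, _, ht1, rfl⟩)
  · exact hM
  · exact hγ0 t ht0 ht1

lemma rlim_nonneg (hγ0 : ∀ t : ℚ, 0 ≤ (t:ℝ) → (t:ℝ) < 1 → 0 ≤ γ t) (hM : 0 ≤ M) (u : ℝ) :
    0 ≤ rlim γ M u := by
  refine le_csInf ⟨M, mem_insert _ _⟩ ?_
  rintro x (rfl | ⟨t, ht0, _, ht1, rfl⟩)
  · exact hM
  · exact hγ0 t ht0 ht1

lemma rlim_monotone (hγ0 : ∀ t : ℚ, 0 ≤ (t:ℝ) → (t:ℝ) < 1 → 0 ≤ γ t) (hM : 0 ≤ M) :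
    Monotone (rlim γ M) := by
  intro u v huv
  refine csInf_le_csInf (rlim_bddBelow hγ0 hM u) ⟨M, mem_insert _ _⟩ ?_
  rintro x (rfl | ⟨t, ht0, htv, ht1, rfl⟩)
  · exact mem_insert _ _
  · exact mem_insert_of_mem _ ⟨t, ht0, lt_of_le_of_lt huv htv, ht1, rfl⟩

lemma rlim_le (hγ0 : ∀ t : ℚ, 0 ≤ (t:ℝ) → (t:ℝ) < 1 → 0 ≤ γ t) (hM : 0 ≤ M)
    {u : ℝ} {t : ℚ} (ht0 : 0 ≤ (t:ℝ)) (hut : u < (t:ℝ)) (ht1 : (t:ℝ) < 1) :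
    rlim γ M u ≤ γ t :=
  csInf_le (rlim_bddBelow hγ0 hM u) (mem_insert_of_mem _ ⟨t, ht0, hut, ht1, rfl⟩)

lemma le_rlim (hγmono : ∀ r t : ℚ, 0 ≤ (r:ℝ) → r ≤ t → (t:ℝ) < 1 → γ r ≤ γ t)
    (hγM : ∀ t : ℚ, 0 ≤ (t:ℝ) → (t:ℝ) < 1 → γ t ≤ M)
    {u : ℝ} {t : ℚ} (ht0 : 0 ≤ (t:ℝ)) (ht1 : (t:ℝ) < 1) (htu : (t:ℝ) ≤ u) :
    γ t ≤ rlim γ M u := by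
  refine le_csInf ⟨M, mem_insert _ _⟩ ?_
  rintro x (rfl | ⟨r, hr0, hur, hr1, rfl⟩)
  · exact hγM t ht0 ht1
  · refine hγmono t r ht0 ?_ hr1
    exact_mod_cast le_of_lt (lt_of_le_of_lt htu hur)

/-- The key sandwich lemma: at interior continuity points of `rlim γ M`, pointwise monotone
approximations converging to `γ` on rationals converge to `rlim γ M`. -/
lemma tendsto_rlim {h : ℕ → ℝ → ℝ}
    (hmono : ∀ k, MonotoneOn (h k) (Ico (0:ℝ) 1))
    (hconv : ∀ t : ℚ, 0 ≤ (t:ℝ) → (t:ℝ) < 1 → Tendsto (fun k => h k (t:ℝ)) atTop (𝓝 (γ t)))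
    (hγmono : ∀ r t : ℚ, 0 ≤ (r:ℝ) → r ≤ t → (t:ℝ) < 1 → γ r ≤ γ t)
    (hγ0 : ∀ t : ℚ, 0 ≤ (t:ℝ) → (t:ℝ) < 1 → 0 ≤ γ t)
    (hγM : ∀ t : ℚ, 0 ≤ (t:ℝ) → (t:ℝ) < 1 → γ t ≤ M) (hM : 0 ≤ M)
    {u : ℝ} (hu : u ∈ Ioo (0:ℝ) 1) (hc : ContinuousAt (rlim γ M) u) :
    Tendsto (fun k => h k u) atTop (𝓝 (rlim γ M u)) := by
  obtain ⟨hu0, hu1⟩ := hu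
  refine tendsto_order.2 ⟨fun a ha => ?_, fun b hb => ?_⟩
  · -- a < rlim γ M u : eventually a < h k u
    have h1 : ∀ᶠ x in 𝓝[<] u, a < rlim γ M x :=
      (hc.eventually (eventually_gt_nhds ha)).filter_mono nhdsWithin_le_nhds
    have h2 : ∀ᶠ x in 𝓝[<] u, x ∈ Ioo (0:ℝ) u := Ioo_mem_nhdsLT_of_mem ⟨hu0, le_refl u⟩
    obtain ⟨x, hax, hx0, hxu⟩ := (h1.and h2).exists
    obtain ⟨r, hxr, hru⟩ := exists_rat_btwn hxu
    have hr0 : (0:ℝ) ≤ (r:ℝ) := le_of_lt (lt_trans hx0 hxr)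
    have hr1 : (r:ℝ) < 1 := lt_trans hru hu1
    have hΦr : a < γ r := lt_of_lt_of_le hax (rlim_le hγ0 hM hr0 hxr hr1)
    have := (hconv r hr0 hr1).eventually (eventually_gt_nhds hΦr)
    filter_upwards [this] with k hk
    exact lt_of_lt_of_le hk ((hmono k) ⟨hr0, hr1⟩ ⟨le_of_lt hu0, hu1⟩ (le_of_lt hru))
  · -- rlim γ M u < b : eventually h k u < b
    have h1 : ∀ᶠ x in 𝓝[>] u, rlim γ M x < b :=
      (hc.eventually (eventually_lt_nhds hb)).filter_mono nhdsWithin_le_nhds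
    have h2 : ∀ᶠ x in 𝓝[>] u, x ∈ Ioo u 1 := Ioo_mem_nhdsGT_of_mem ⟨le_refl u, hu1⟩
    obtain ⟨x, hbx, hux, hx1⟩ := (h1.and h2).exists
    obtain ⟨t, hut, htx⟩ := exists_rat_btwn hux
    have ht0 : (0:ℝ) ≤ (t:ℝ) := le_of_lt (lt_trans hu0 hut)
    have ht1 : (t:ℝ) < 1 := lt_trans htx hx1
    have hΦt : γ t < b :=
      lt_of_le_of_lt (le_rlim hγmono hγM ht0 ht1 (le_of_lt htx)) hbx
    have := (hconv t ht0 ht1).eventually (eventually_lt_nhds hΦt)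
    filter_upwards [this] with k hk
    exact lt_of_le_of_lt ((hmono k) ⟨le_of_lt hu0, hu1⟩ ⟨ht0, ht1⟩ (le_of_lt hut)) hk



lemma tendsto_rlim_of_rat
    (hγmono : ∀ r t : ℚ, 0 ≤ (r:ℝ) → r ≤ t → (t:ℝ) < 1 → γ r ≤ γ t)
    (hγ0 : ∀ t : ℚ, 0 ≤ (t:ℝ) → (t:ℝ) < 1 → 0 ≤ γ t)
    (hγM : ∀ t : ℚ, 0 ≤ (t:ℝ) → (t:ℝ) < 1 → γ t ≤ M) (hM : 0 ≤ M)
    {u : ℝ} (hu0 : 0 ≤ u)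
    {t : ℕ → ℚ} (ht : ∀ n, u < ((t n):ℝ) ∧ ((t n):ℝ) < 1)
    (htt : Tendsto (fun n => ((t n):ℝ)) atTop (𝓝 u)) :
    Tendsto (fun n => γ (t n)) atTop (𝓝 (rlim γ M u)) := by
  refine tendsto_order.2 ⟨fun a ha => ?_, fun b hb => ?_⟩
  · refine Eventually.of_forall fun n => lt_of_lt_of_le ha ?_
    exact rlim_le hγ0 hM (le_trans hu0 (le_of_lt (ht n).1)) (ht n).1 (ht n).2
  · obtain ⟨x, hx, hxb⟩ := exists_lt_of_csInf_lt ⟨M, mem_insert _ _⟩ hb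
    rcases hx with rfl | ⟨r, hr0, hur, hr1, rfl⟩
    · exact Eventually.of_forall fun n =>
        lt_of_le_of_lt (hγM _ (le_trans hu0 (le_of_lt (ht n).1)) (ht n).2) hxb
    · have hev := htt.eventually (eventually_lt_nhds hur)
      filter_upwards [hev] with n hn
      refine lt_of_le_of_lt (hγmono (t n) r (le_trans hu0 (le_of_lt (ht n).1)) ?_ hr1) hxb
      exact_mod_cast le_of_lt hn

lemma exists_rat_seq {u : ℝ} (hu : u ∈ Ico (0:ℝ) 1) :
    ∃ t : ℕ → ℚ, (∀ n, u < ((t n):ℝ) ∧ ((t n):ℝ) < 1) ∧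
      Tendsto (fun n => ((t n):ℝ)) atTop (𝓝 u) := by
  have hex : ∀ n : ℕ, ∃ r : ℚ, u < (r:ℝ) ∧ (r:ℝ) < min 1 (u + 1/(n+1)) := by
    intro n
    have hlt : u < min 1 (u + 1/((n:ℝ)+1)) := by
      refine lt_min hu.2 ?_
      have : (0:ℝ) < 1/((n:ℝ)+1) := by positivity
      linarith
    exact exists_rat_btwn hlt
  choose t ht1 ht2 using hex
  refine ⟨t, fun n => ⟨ht1 n, lt_of_lt_of_le (ht2 n) (min_le_left _ _)⟩, ?_⟩
  have hupper : ∀ n : ℕ, ((t n):ℝ) ≤ u + 1/((n:ℝ)+1) :=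
    fun n => le_of_lt (lt_of_lt_of_le (ht2 n) (min_le_right _ _))
  have hlim : Tendsto (fun n : ℕ => u + 1/((n:ℝ)+1)) atTop (𝓝 (u+0)) :=
    tendsto_const_nhds.add tendsto_one_div_add_atTop_nhds_zero_nat
  rw [add_zero] at hlim
  exact tendsto_of_tendsto_of_tendsto_of_le_of_le tendsto_const_nhds hlim
    (fun n => le_of_lt (ht1 n)) hupper

def wvec (i j : Fin D) : Fin D → ℝ := fun l => (if l = i then 1 else 0) + (if l = j then 1 else 0)

lemma quadF_wvec (i j : Fin D) (x : MatSp D) :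
    quadF (wvec i j) x = x (i, i) + x (i, j) + x (j, i) + x (j, j) := by
  have := quadF_two i j 1 1 x
  unfold wvec
  rw [this]; ring

lemma entry_formula {x : MatSp D} (hsym : ∀ i j : Fin D, x (i, j) = x (j, i)) (i j : Fin D) :
    x (i, j) = (quadF (wvec i j) x - quadF (wvec i i) x / 4 - quadF (wvec j j) x / 4) / 2 := by
  rw [quadF_wvec, quadF_wvec, quadF_wvec]
  have := hsym i j
  linarith

def MvB (C : ℝ) (p : Fin D × Fin D) : ℝ :=
  (∑ i, |wvec p.1 p.2 i|) * (∑ i, |wvec p.1 p.2 i|) * C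

def gammaF (g : ℚ → MatSp D) (p : Fin D × Fin D) : ℚ → ℝ :=
  fun r => quadF (wvec p.1 p.2) (g r)

def PhiF (g : ℚ → MatSp D) (C : ℝ) (p : Fin D × Fin D) : ℝ → ℝ :=
  rlim (gammaF g p) (MvB C p)

def limPath (g : ℚ → MatSp D) (C : ℝ) : ℝ → MatSp D :=
  fun u => (EuclideanSpace.equiv (Fin D × Fin D) ℝ).symm
    (fun p => (PhiF g C (p.1, p.2) u - PhiF g C (p.1, p.1) u / 4
      - PhiF g C (p.2, p.2) u / 4) / 2)

lemma limPath_apply (g : ℚ → MatSp D) (C : ℝ) (u : ℝ) (p : Fin D × Fin D) :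
    limPath g C u p = (PhiF g C (p.1, p.2) u - PhiF g C (p.1, p.1) u / 4
      - PhiF g C (p.2, p.2) u / 4) / 2 := rfl

section props
variable {g : ℚ → MatSp D} {C : ℝ}

lemma MvB_nonneg (hC : 0 ≤ C) (p : Fin D × Fin D) : 0 ≤ MvB C p := by
  unfold MvB
  have h1 : (0:ℝ) ≤ ∑ i, |wvec p.1 p.2 i| := Finset.sum_nonneg fun i _ => abs_nonneg _
  positivity

lemma gammaF_nonneg (hgpsd : ∀ r : ℚ, 0 ≤ (r:ℝ) → (r:ℝ) < 1 → g r ∈ psdCone D)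
    (p : Fin D × Fin D) : ∀ t : ℚ, 0 ≤ (t:ℝ) → (t:ℝ) < 1 → 0 ≤ gammaF g p t :=
  fun t h0 h1 => quadF_nonneg (hgpsd t h0 h1)

lemma gammaF_le (hgnorm : ∀ r : ℚ, ‖g r‖ ≤ C) (p : Fin D × Fin D) :
    ∀ t : ℚ, 0 ≤ (t:ℝ) → (t:ℝ) < 1 → gammaF g p t ≤ MvB C p := by
  intro t _ _
  have h1 : (0:ℝ) ≤ ∑ i, |wvec p.1 p.2 i| := Finset.sum_nonneg fun i _ => abs_nonneg _
  calc gammaF g p t ≤ |gammaF g p t| := le_abs_self _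
    _ ≤ (∑ i, |wvec p.1 p.2 i|) * (∑ i, |wvec p.1 p.2 i|) * ‖g t‖ := abs_quadF_le _ _
    _ ≤ MvB C p := by
        unfold MvB
        exact mul_le_mul_of_nonneg_left (hgnorm t) (by positivity)

lemma gammaF_mono
    (hgmono : ∀ r t : ℚ, 0 ≤ (r:ℝ) → r ≤ t → (t:ℝ) < 1 → g t - g r ∈ psdCone D)
    (p : Fin D × Fin D) :
    ∀ r t : ℚ, 0 ≤ (r:ℝ) → r ≤ t → (t:ℝ) < 1 → gammaF g p r ≤ gammaF g p t := by
  intro r t h0 hrt h1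
  have := quadF_nonneg (v := wvec p.1 p.2) (hgmono r t h0 hrt h1)
  rw [quadF_sub] at this
  unfold gammaF
  linarith

lemma PhiF_monotone (hC : 0 ≤ C)
    (hgpsd : ∀ r : ℚ, 0 ≤ (r:ℝ) → (r:ℝ) < 1 → g r ∈ psdCone D) (p : Fin D × Fin D) :
    Monotone (PhiF g C p) :=
  rlim_monotone (gammaF_nonneg hgpsd p) (MvB_nonneg hC p)

lemma limPath_measurable (hC : 0 ≤ C)
    (hgpsd : ∀ r : ℚ, 0 ≤ (r:ℝ) → (r:ℝ) < 1 → g r ∈ psdCone D) :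
    Measurable (limPath g C) := by
  refine ((EuclideanSpace.equiv (Fin D × Fin D) ℝ).symm.continuous.measurable).comp ?_
  refine measurable_pi_lambda _ fun p => ?_
  have m1 := (PhiF_monotone hC hgpsd (p.1, p.2)).measurable
  have m2 := (PhiF_monotone hC hgpsd (p.1, p.1)).measurable
  have m3 := (PhiF_monotone hC hgpsd (p.2, p.2)).measurable
  exact ((m1.sub (m2.div_const 4)).sub (m3.div_const 4)).div_const 2

lemma limPath_tendsto (hC : 0 ≤ C) (hgnorm : ∀ r : ℚ, ‖g r‖ ≤ C)
    (hgpsd : ∀ r : ℚ, 0 ≤ (r:ℝ) → (r:ℝ) < 1 → g r ∈ psdCone D)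
    (hgmono : ∀ r t : ℚ, 0 ≤ (r:ℝ) → r ≤ t → (t:ℝ) < 1 → g t - g r ∈ psdCone D)
    {u : ℝ} (hu : u ∈ Ico (0:ℝ) 1) {t : ℕ → ℚ}
    (ht : ∀ n, u < ((t n):ℝ) ∧ ((t n):ℝ) < 1)
    (htt : Tendsto (fun n => ((t n):ℝ)) atTop (𝓝 u)) :
    Tendsto (fun n => g (t n)) atTop (𝓝 (limPath g C u)) := by
  have hA : ∀ p : Fin D × Fin D,
      Tendsto (fun n => gammaF g p (t n)) atTop (𝓝 (PhiF g C p u)) := fun p =>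
    tendsto_rlim_of_rat (gammaF_mono hgmono p) (gammaF_nonneg hgpsd p)
      (gammaF_le hgnorm p) (MvB_nonneg hC p) hu.1 ht htt
  have hcoord : ∀ p : Fin D × Fin D,
      Tendsto (fun n => g (t n) p) atTop (𝓝 (limPath g C u p)) := by
    rintro ⟨i, j⟩
    have hform : ∀ n, g (t n) (i, j) =
        (gammaF g (i, j) (t n) - gammaF g (i, i) (t n) / 4 - gammaF g (j, j) (t n) / 4) / 2 := by
      intro n
      have hpsd := hgpsd (t n) (le_trans hu.1 (le_of_lt (ht n).1)) (ht n).2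
      exact entry_formula hpsd.1 i j
    rw [limPath_apply]
    simp only [hform]
    exact (((hA (i, j)).sub ((hA (i, i)).div_const 4)).sub ((hA (j, j)).div_const 4)).div_const 2
  have h2 : Tendsto (fun n => (EuclideanSpace.equiv (Fin D × Fin D) ℝ) (g (t n))) atTop
      (𝓝 ((EuclideanSpace.equiv (Fin D × Fin D) ℝ) (limPath g C u))) :=
    tendsto_pi_nhds.2 hcoord
  have := ((EuclideanSpace.equiv (Fin D × Fin D) ℝ).symm.continuous.tendsto _).comp h2
  simpa [Function.comp_def] using this

lemma limPath_mem_psdCone (hC : 0 ≤ C) (hgnorm : ∀ r : ℚ, ‖g r‖ ≤ C)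
    (hgpsd : ∀ r : ℚ, 0 ≤ (r:ℝ) → (r:ℝ) < 1 → g r ∈ psdCone D)
    (hgmono : ∀ r t : ℚ, 0 ≤ (r:ℝ) → r ≤ t → (t:ℝ) < 1 → g t - g r ∈ psdCone D)
    {u : ℝ} (hu : u ∈ Ico (0:ℝ) 1) : limPath g C u ∈ psdCone D := by
  obtain ⟨t, ht, htt⟩ := exists_rat_seq hu
  refine isClosed_psdCone.mem_of_tendsto (limPath_tendsto hC hgnorm hgpsd hgmono hu ht htt)
    (Eventually.of_forall fun n => ?_)
  exact hgpsd (t n) (le_trans hu.1 (le_of_lt (ht n).1)) (ht n).2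

lemma limPath_norm_le (hC : 0 ≤ C) (hgnorm : ∀ r : ℚ, ‖g r‖ ≤ C)
    (hgpsd : ∀ r : ℚ, 0 ≤ (r:ℝ) → (r:ℝ) < 1 → g r ∈ psdCone D)
    (hgmono : ∀ r t : ℚ, 0 ≤ (r:ℝ) → r ≤ t → (t:ℝ) < 1 → g t - g r ∈ psdCone D)
    {u : ℝ} (hu : u ∈ Ico (0:ℝ) 1) : ‖limPath g C u‖ ≤ C := by
  obtain ⟨t, ht, htt⟩ := exists_rat_seq hu
  have hmem : limPath g C u ∈ closedBall (0 : MatSp D) C := by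
    refine isClosed_closedBall.mem_of_tendsto (limPath_tendsto hC hgnorm hgpsd hgmono hu ht htt)
      (Eventually.of_forall fun n => ?_)
    rw [mem_closedBall_zero_iff]
    exact hgnorm (t n)
  rwa [mem_closedBall_zero_iff] at hmem

lemma limPath_mono (hC : 0 ≤ C) (hgnorm : ∀ r : ℚ, ‖g r‖ ≤ C)
    (hgpsd : ∀ r : ℚ, 0 ≤ (r:ℝ) → (r:ℝ) < 1 → g r ∈ psdCone D)
    (hgmono : ∀ r t : ℚ, 0 ≤ (r:ℝ) → r ≤ t → (t:ℝ) < 1 → g t - g r ∈ psdCone D)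
    {u v : ℝ} (hu : u ∈ Ico (0:ℝ) 1) (hv : v ∈ Ico (0:ℝ) 1) (huv : u ≤ v) :
    limPath g C v - limPath g C u ∈ psdCone D := by
  rcases eq_or_lt_of_le huv with rfl | hlt
  · rw [sub_self]
    exact ⟨fun i j => rfl, fun w => by simp⟩
  · obtain ⟨t, ht, htt⟩ := exists_rat_seq hu
    obtain ⟨t', ht', htt'⟩ := exists_rat_seq hv
    have hten := (limPath_tendsto hC hgnorm hgpsd hgmono hv ht' htt').sub
      (limPath_tendsto hC hgnorm hgpsd hgmono hu ht htt)
    refine isClosed_psdCone.mem_of_tendsto hten ?_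
    have hev : ∀ᶠ n in atTop, ((t n):ℝ) < v := htt.eventually (eventually_lt_nhds hlt)
    filter_upwards [hev] with n hn
    refine hgmono (t n) (t' n) (le_trans hu.1 (le_of_lt (ht n).1)) ?_ (ht' n).2
    have : ((t n):ℝ) ≤ ((t' n):ℝ) := le_of_lt (lt_trans hn (ht' n).1)
    exact_mod_cast this

end props


/-- Almost-everywhere convergence of the monotone approximants to the limit path. -/
lemma limPath_ae_tendsto (hC : 0 ≤ C) (hgnorm : ∀ r : ℚ, ‖g r‖ ≤ C)
    (hgpsd : ∀ r : ℚ, 0 ≤ (r:ℝ) → (r:ℝ) < 1 → g r ∈ psdCone D)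
    (hgmono : ∀ r t : ℚ, 0 ≤ (r:ℝ) → r ≤ t → (t:ℝ) < 1 → g t - g r ∈ psdCone D)
    {h : ℕ → ℝ → MatSp D}
    (hpsd : ∀ k, ∀ u ∈ Ico (0:ℝ) 1, h k u ∈ psdCone D)
    (hmono : ∀ k, ∀ u ∈ Ico (0:ℝ) 1, ∀ v ∈ Ico (0:ℝ) 1, u ≤ v → h k v - h k u ∈ psdCone D)
    (hconv : ∀ r : ℚ, 0 ≤ (r:ℝ) → (r:ℝ) < 1 →
      Tendsto (fun k => h k (r:ℝ)) atTop (𝓝 (g r))) :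
    ∃ N : Set ℝ, N.Countable ∧ ∀ u ∈ Ioo (0:ℝ) 1, u ∉ N →
      Tendsto (fun k => h k u) atTop (𝓝 (limPath g C u)) := by
  refine ⟨⋃ p : Fin D × Fin D, {x | ¬ContinuousAt (PhiF g C p) x},
    countable_iUnion fun p => (PhiF_monotone hC hgpsd p).countable_not_continuousAt, ?_⟩
  intro u hu hN
  have hcont : ∀ p : Fin D × Fin D, ContinuousAt (PhiF g C p) u := by
    intro p
    by_contra hcp
    exact hN (mem_iUnion.2 ⟨p, hcp⟩)
  have hscal : ∀ p : Fin D × Fin D,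
      Tendsto (fun k => quadF (wvec p.1 p.2) (h k u)) atTop (𝓝 (PhiF g C p u)) := by
    intro p
    show Tendsto (fun k => (fun k u => quadF (wvec p.1 p.2) (h k u)) k u) atTop
      (𝓝 (rlim (gammaF g p) (MvB C p) u))
    refine tendsto_rlim (γ := gammaF g p) (M := MvB C p)
      (h := fun k u => quadF (wvec p.1 p.2) (h k u)) ?_ ?_
      (gammaF_mono hgmono p) (gammaF_nonneg hgpsd p) (gammaF_le hgnorm p)
      (MvB_nonneg hC p) hu (hcont p)
    · intro k a ha b hb hab
      have := quadF_nonneg (v := wvec p.1 p.2) (hmono k a ha b hb hab)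
      rw [quadF_sub] at this
      linarith
    · intro t h0 h1
      exact ((continuous_quadF (wvec p.1 p.2)).tendsto _).comp (hconv t h0 h1)
  have hcoord : ∀ p : Fin D × Fin D,
      Tendsto (fun k => h k u p) atTop (𝓝 (limPath g C u p)) := by
    rintro ⟨i, j⟩
    have huI : u ∈ Ico (0:ℝ) 1 := ⟨le_of_lt hu.1, hu.2⟩
    have hform : ∀ k, h k u (i, j) =
        (quadF (wvec i j) (h k u) - quadF (wvec i i) (h k u) / 4
          - quadF (wvec j j) (h k u) / 4) / 2 :=
      fun k => entry_formula (hpsd k u huI).1 i j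
    rw [limPath_apply]
    simp only [hform]
    exact (((hscal (i, j)).sub ((hscal (i, i)).div_const 4)).sub
      ((hscal (j, j)).div_const 4)).div_const 2
  have h2 : Tendsto (fun k => (EuclideanSpace.equiv (Fin D × Fin D) ℝ) (h k u)) atTop
      (𝓝 ((EuclideanSpace.equiv (Fin D × Fin D) ℝ) (limPath g C u))) :=
    tendsto_pi_nhds.2 hcoord
  have := ((EuclideanSpace.equiv (Fin D × Fin D) ℝ).symm.continuous.tendsto _).comp h2
  simpa [Function.comp_def] using this



lemma isProbRestrict : IsProbabilityMeasure (volume.restrict (Ico (0:ℝ) 1)) := by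
  constructor
  rw [Measure.restrict_apply_univ, Real.volume_Ico]
  norm_num

lemma W1_bddBelow {α : Type*} [MeasurableSpace α] [PseudoMetricSpace α] (μ ν : Measure α) :
    BddBelow {r : ℝ | ∃ π : Measure (α × α), IsProbabilityMeasure π ∧
      π.map Prod.fst = μ ∧ π.map Prod.snd = ν ∧ r = ∫ p, dist p.1 p.2 ∂π} := by
  refine ⟨0, ?_⟩
  rintro r ⟨π, hπ, h1, h2, rfl⟩
  exact integral_nonneg fun p => dist_nonneg

lemma W1_nonneg {α : Type*} [MeasurableSpace α] [PseudoMetricSpace α] (μ ν : Measure α) :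
    0 ≤ W1 dist μ ν :=
  Real.sInf_nonneg fun r hr => by
    obtain ⟨π, hπ, h1, h2, rfl⟩ := hr; exact integral_nonneg fun p => dist_nonneg

/-- Coupling two image measures by the same parametrization bounds `W1`. -/
lemma W1_le_integral {q1 q2 : ℝ → MatSp D} (h1 : Measurable q1) (h2 : Measurable q2) :
    W1 dist (Measure.map q1 (volume.restrict (Ico (0:ℝ) 1)))
        (Measure.map q2 (volume.restrict (Ico (0:ℝ) 1)))
      ≤ ∫ u, dist (q1 u) (q2 u) ∂(volume.restrict (Ico (0:ℝ) 1)) := by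
  set ρ := volume.restrict (Ico (0:ℝ) 1)
  have : IsProbabilityMeasure ρ := isProbRestrict
  have hm : Measurable fun u => (q1 u, q2 u) := h1.prodMk h2
  refine csInf_le (W1_bddBelow _ _) ?_
  refine ⟨Measure.map (fun u => (q1 u, q2 u)) ρ, Measure.isProbabilityMeasure_map hm.aemeasurable,
    ?_, ?_, ?_⟩
  · rw [Measure.map_map measurable_fst hm]; rfl
  · rw [Measure.map_map measurable_snd hm]; rfl
  · rw [integral_map hm.aemeasurable
      (continuous_dist.aestronglyMeasurable)]

/-- Bounding difference of integrals of a Lipschitz function via a near-optimal coupling. -/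
lemma abs_integral_sub_le_of_coupling {μ ν : Measure (MatSp D)}
    (hμ : IsProbabilityMeasure μ) (hν : IsProbabilityMeasure ν)
    {K : Set (MatSp D)} (hKm : MeasurableSet K) (hμK : μ Kᶜ = 0) (hνK : ν Kᶜ = 0)
    {CK : ℝ} (hCK : ∀ x ∈ K, ‖x‖ ≤ CK)
    {f : MatSp D → ℝ} {L : ℝ≥0} (hf : LipschitzWith L f) (hfb : ∀ x, |f x| ≤ 1)
    {π : Measure (MatSp D × MatSp D)} (hπ : IsProbabilityMeasure π)
    (hπ1 : π.map Prod.fst = μ) (hπ2 : π.map Prod.snd = ν) :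
    |∫ x, f x ∂μ - ∫ x, f x ∂ν| ≤ (L:ℝ) * ∫ p, dist p.1 p.2 ∂π := by
  have hfc : Continuous f := hf.continuous
  have haeK : ∀ᵐ p ∂π, p.1 ∈ K ∧ p.2 ∈ K := by
    have n1 : π (Prod.fst ⁻¹' Kᶜ) = 0 := by
      rw [← Measure.map_apply measurable_fst hKm.compl, hπ1]; exact hμK
    have n2 : π (Prod.snd ⁻¹' Kᶜ) = 0 := by
      rw [← Measure.map_apply measurable_snd hKm.compl, hπ2]; exact hνK
    rw [ae_iff]
    refine measure_mono_null ?_ (measure_union_null n1 n2)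
    intro p hp
    simp only [mem_setOf_eq, not_and_or] at hp
    rcases hp with h | h
    · exact Or.inl h
    · exact Or.inr h
  have hint1 : Integrable (fun p : MatSp D × MatSp D => f p.1) π := by
    refine Integrable.mono' (integrable_const 1)
      (hfc.comp continuous_fst).aestronglyMeasurable ?_
    exact Eventually.of_forall fun p => by simpa [Real.norm_eq_abs] using hfb p.1
  have hint2 : Integrable (fun p : MatSp D × MatSp D => f p.2) π := by
    refine Integrable.mono' (integrable_const 1)
      (hfc.comp continuous_snd).aestronglyMeasurable ?_
    exact Eventually.of_forall fun p => by simpa [Real.norm_eq_abs] using hfb p.2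
  have hintd : Integrable (fun p : MatSp D × MatSp D => dist p.1 p.2) π := by
    refine Integrable.mono' (integrable_const (2 * CK + 2 * |CK|))
      continuous_dist.aestronglyMeasurable ?_
    filter_upwards [haeK] with p hp
    rw [Real.norm_eq_abs, abs_of_nonneg dist_nonneg]
    calc dist p.1 p.2 ≤ dist p.1 0 + dist 0 p.2 := dist_triangle _ _ _
      _ = ‖p.1‖ + ‖p.2‖ := by rw [dist_zero_right, dist_zero_left]
      _ ≤ CK + CK := add_le_add (hCK _ hp.1) (hCK _ hp.2)
      _ ≤ 2 * CK + 2 * |CK| := by have := le_abs_self CK; have := abs_nonneg CK; linarith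
  have e1 : ∫ x, f x ∂μ = ∫ p, f p.1 ∂π := by
    rw [← hπ1, integral_map measurable_fst.aemeasurable hfc.aestronglyMeasurable]
  have e2 : ∫ x, f x ∂ν = ∫ p, f p.2 ∂π := by
    rw [← hπ2, integral_map measurable_snd.aemeasurable hfc.aestronglyMeasurable]
  rw [e1, e2, ← integral_sub hint1 hint2]
  calc |∫ p, (f p.1 - f p.2) ∂π| ≤ ∫ p, |f p.1 - f p.2| ∂π := by
        simpa [Real.norm_eq_abs] using
          norm_integral_le_integral_norm (μ := π) (fun p : MatSp D × MatSp D => f p.1 - f p.2)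
    _ ≤ ∫ p, (L:ℝ) * dist p.1 p.2 ∂π := by
        refine integral_mono ((hint1.sub hint2).abs) (hintd.const_mul _) fun p => ?_
        have := hf.dist_le_mul p.1 p.2
        rwa [Real.dist_eq] at this
    _ = (L:ℝ) * ∫ p, dist p.1 p.2 ∂π := integral_const_mul _ _



section testFsec
variable {Ω : Type*} [MeasurableSpace Ω] [MetricSpace Ω] [BorelSpace Ω]

/-- Lipschitz approximations from above to the indicator of a closed set. -/
def testF (n : ℕ) (F : Set Ω) (x : Ω) : ℝ := max (1 - n * infDist x F) 0

lemma testF_nonneg (n : ℕ) (F : Set Ω) (x : Ω) : 0 ≤ testF n F x := le_max_right _ _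

lemma testF_le_one (n : ℕ) (F : Set Ω) (x : Ω) : testF n F x ≤ 1 := by
  refine max_le ?_ zero_le_one
  have : 0 ≤ (n:ℝ) * infDist x F :=
    mul_nonneg (Nat.cast_nonneg n) infDist_nonneg
  linarith

lemma testF_abs_le_one (n : ℕ) (F : Set Ω) (x : Ω) : |testF n F x| ≤ 1 :=
  abs_le.2 ⟨le_trans (by norm_num) (testF_nonneg n F x), testF_le_one n F x⟩

lemma testF_lipschitz (n : ℕ) (F : Set Ω) : LipschitzWith n (testF n F) := by
  refine LipschitzWith.of_dist_le_mul fun x y => ?_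
  have h := (lipschitz_infDist_pt F).dist_le_mul x y
  rw [NNReal.coe_one, one_mul, Real.dist_eq] at h
  rw [Real.dist_eq]
  calc |testF n F x - testF n F y| ≤ |(1 - n * infDist x F) - (1 - n * infDist y F)| :=
        abs_max_sub_max_le_abs _ _ _
    _ = (n:ℝ) * |infDist x F - infDist y F| := by
        rw [show (1 - (n:ℝ) * infDist x F) - (1 - n * infDist y F)
            = (n:ℝ) * (infDist y F - infDist x F) by ring, abs_mul,
          abs_of_nonneg (n.cast_nonneg : (0:ℝ) ≤ n), abs_sub_comm]
    _ ≤ (n:ℝ) * dist x y := by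
        have : ((n:ℝ≥0):ℝ) = (n:ℝ) := by norm_num
        exact mul_le_mul_of_nonneg_left h n.cast_nonneg

lemma testF_tendsto_indicator {F : Set Ω} (hF : IsClosed F) (hFne : F.Nonempty) (x : Ω) :
    Tendsto (fun n => testF n F x) atTop (𝓝 (F.indicator (fun _ => (1:ℝ)) x)) := by
  by_cases hx : x ∈ F
  · have : ∀ n, testF n F x = 1 := by
      intro n
      have : infDist x F = 0 := infDist_zero_of_mem hx
      simp [testF, this]
    simp only [this, indicator_of_mem hx]
    exact tendsto_const_nhds
  · have hd : 0 < infDist x F := (hF.notMem_iff_infDist_pos hFne).1 hx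
    rw [indicator_of_notMem hx]
    have : ∀ᶠ n : ℕ in atTop, testF n F x = 0 := by
      obtain ⟨N, hN⟩ := exists_nat_gt (1 / infDist x F)
      refine eventually_atTop.2 ⟨N, fun n hn => ?_⟩
      have h1 : 1 / infDist x F < (n:ℝ) := lt_of_lt_of_le hN (by exact_mod_cast hn)
      have h2 : 1 < (n:ℝ) * infDist x F := by
        rw [div_lt_iff₀ hd] at h1; linarith
      simp only [testF]
      rw [max_eq_right]; linarith
    exact Tendsto.congr' (by filter_upwards [this] with n hn; rw [hn]) tendsto_const_nhds

lemma tendsto_integral_testF {F : Set Ω} (hF : IsClosed F) (hFne : F.Nonempty)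
    (μ : Measure Ω) [IsProbabilityMeasure μ] :
    Tendsto (fun n => ∫ x, testF n F x ∂μ) atTop (𝓝 ((μ F).toReal)) := by
  have hmeas : ∀ n : ℕ, AEStronglyMeasurable (fun x => testF n F x) μ :=
    fun n => ((testF_lipschitz n F).continuous).aestronglyMeasurable
  have h := tendsto_integral_of_dominated_convergence (μ := μ)
    (F := fun n x => testF n F x) (f := F.indicator fun _ => (1:ℝ)) (bound := fun _ => 1)
    hmeas (integrable_const 1)
    (fun n => Eventually.of_forall fun x => by
      rw [Real.norm_eq_abs]; exact testF_abs_le_one n F x)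
    (Eventually.of_forall fun x => testF_tendsto_indicator hF hFne x)
  have : ∫ x, F.indicator (fun _ => (1:ℝ)) x ∂μ = (μ F).toReal := by
    rw [integral_indicator_const (1:ℝ) hF.measurableSet]; simp [Measure.real]
  rwa [this] at h

/-- Two Borel probability measures on a metric space agreeing on the integrals of all the test
functions `testF n F` for closed `F` coincide. -/
lemma measure_ext_testF (μ ν : Measure Ω) [IsProbabilityMeasure μ] [IsProbabilityMeasure ν]
    (h : ∀ (F : Set Ω), IsClosed F → F.Nonempty → ∀ n : ℕ,
      ∫ x, testF n F x ∂μ = ∫ x, testF n F x ∂ν) : μ = ν := by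
  have hclosed : ∀ F : Set Ω, IsClosed F → μ F = ν F := by
    intro F hF
    rcases F.eq_empty_or_nonempty with rfl | hFne
    · simp
    · have h1 := tendsto_integral_testF hF hFne μ
      have h2 := tendsto_integral_testF hF hFne ν
      have heq : (μ F).toReal = (ν F).toReal := by
        refine tendsto_nhds_unique ?_ h2
        exact h1.congr fun n => h F hF hFne n
      have hμt : μ F ≠ ⊤ := measure_ne_top μ F
      have hνt : ν F ≠ ⊤ := measure_ne_top ν F
      exact (ENNReal.toReal_eq_toReal_iff' hμt hνt).1 heq
  refine ext_of_generate_finite {s : Set Ω | IsClosed s} ?_ ?_ ?_ ?_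
  · exact BorelSpace.measurable_eq.trans borel_eq_generateFrom_isClosed
  · exact fun s hs t ht _ => hs.inter ht
  · exact fun s hs => hclosed s hs
  · rw [measure_univ, measure_univ]


end testFsec

/-- Core construction: every sequence in `P↑(K)` has a subsequence converging in
Wasserstein-1 distance to an element of `P↑(K)`. -/
lemma core (D : ℕ) (K : Set (MatSp D)) (hKc : IsCompact K)
    (μseq : ℕ → Measure (MatSp D)) (hmem : ∀ k, μseq k ∈ Pup D K) :
    ∃ μ ∈ Pup D K, ∃ s : ℕ → ℕ, StrictMono s ∧
      Tendsto (fun k => W1 dist (μseq (s k)) μ) atTop (𝓝 0) := by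
  classical
  haveI hρP : IsProbabilityMeasure (volume.restrict (Ico (0:ℝ) 1)) := isProbRestrict
  have hKm : MeasurableSet K := hKc.isClosed.measurableSet
  choose qk hqmeas hqpsd hqmono hqeq using fun k => (hmem k).2
  obtain ⟨CK0, hCK0⟩ := hKc.isBounded.exists_norm_le
  have hCK : ∀ x ∈ K, ‖x‖ ≤ max CK0 0 := fun x hx => le_trans (hCK0 x hx) (le_max_left _ _)
  set C := (D:ℝ) * (D:ℝ) * max CK0 0 with hCdef
  have hCnn : (0:ℝ) ≤ C := by
    have h0 : (0:ℝ) ≤ max CK0 0 := le_max_right _ _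
    positivity
  -- the paths spend a.e. time in K
  have haeK : ∀ k, ∀ᵐ u ∂(volume.restrict (Ico (0:ℝ) 1)), qk k u ∈ K := by
    intro k
    have h0 : μseq k Kᶜ = 0 := (hmem k).1.2
    rw [hqeq k, Measure.map_apply (hqmeas k) hKm.compl] at h0
    have hset : {u : ℝ | ¬ qk k u ∈ K} = qk k ⁻¹' Kᶜ := by ext u; simp
    rw [ae_iff, hset]
    exact h0
  -- uniform bound on the paths
  have hbd : ∀ k, ∀ u ∈ Ico (0:ℝ) 1, ‖qk k u‖ ≤ C := by
    intro k u hu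
    have hne : ∃ u' ∈ Ico u (1:ℝ), qk k u' ∈ K := by
      by_contra hcon
      push_neg at hcon
      have hsub : Ico u (1:ℝ) ⊆ {u' | ¬ qk k u' ∈ K} := fun u' hu' => hcon u' hu'
      have h1 : (volume.restrict (Ico (0:ℝ) 1)) (Ico u 1) = 0 :=
        measure_mono_null hsub ((ae_iff).1 (haeK k))
      rw [Measure.restrict_apply measurableSet_Ico,
        inter_eq_self_of_subset_left (Ico_subset_Ico_left hu.1), Real.volume_Ico] at h1
      rw [ENNReal.ofReal_eq_zero] at h1
      linarith [hu.2]
    obtain ⟨u', hu', hK'⟩ := hne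
    have hu'I : u' ∈ Ico (0:ℝ) 1 := ⟨le_trans hu.1 hu'.1, hu'.2⟩
    calc ‖qk k u‖ ≤ (D:ℝ) * (D:ℝ) * ‖qk k u'‖ :=
        psd_norm_le_of_le (hqpsd k u hu) (hqmono k u hu u' hu'I hu'.1)
      _ ≤ C := by
          rw [hCdef]
          exact mul_le_mul_of_nonneg_left (hCK _ hK') (by positivity)
  -- extraction of a pointwise convergent subsequence on rationals
  have hScomp : IsCompact (univ.pi (fun _ : ℚ => closedBall (0:MatSp D) C)) :=
    isCompact_univ_pi fun _ => isCompact_closedBall _ _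
  have hGS : ∀ k, (fun r : ℚ => if 0 ≤ (r:ℝ) ∧ (r:ℝ) < 1 then qk k (r:ℝ) else 0)
      ∈ univ.pi (fun _ : ℚ => closedBall (0:MatSp D) C) := by
    intro k
    rw [mem_univ_pi]
    intro r
    rw [mem_closedBall_zero_iff]
    split_ifs with hr
    · exact hbd k r ⟨hr.1, hr.2⟩
    · simpa using hCnn
  obtain ⟨g, hgS, s, hsmono, hconv⟩ := hScomp.isSeqCompact hGS
  have hgconv : ∀ r : ℚ, 0 ≤ (r:ℝ) → (r:ℝ) < 1 →
      Tendsto (fun k => qk (s k) (r:ℝ)) atTop (𝓝 (g r)) := by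
    intro r h0 h1
    have hp := tendsto_pi_nhds.1 hconv r
    refine Tendsto.congr (fun k => ?_) hp
    simp only [Function.comp_apply]
    rw [if_pos ⟨h0, h1⟩]
  have hgnorm : ∀ r : ℚ, ‖g r‖ ≤ C := by
    intro r
    rw [mem_univ_pi] at hgS
    have := hgS r
    rwa [mem_closedBall_zero_iff] at this
  have hgpsd : ∀ r : ℚ, 0 ≤ (r:ℝ) → (r:ℝ) < 1 → g r ∈ psdCone D := fun r h0 h1 =>
    isClosed_psdCone.mem_of_tendsto (hgconv r h0 h1)
      (Eventually.of_forall fun k => hqpsd (s k) r ⟨h0, h1⟩)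
  have hgmono : ∀ r t : ℚ, 0 ≤ (r:ℝ) → r ≤ t → (t:ℝ) < 1 → g t - g r ∈ psdCone D := by
    intro r t h0 hrt h1
    have hrt' : (r:ℝ) ≤ (t:ℝ) := by exact_mod_cast hrt
    have hr1 : (r:ℝ) < 1 := lt_of_le_of_lt hrt' h1
    have ht0 : (0:ℝ) ≤ (t:ℝ) := le_trans h0 hrt'
    exact isClosed_psdCone.mem_of_tendsto ((hgconv t ht0 h1).sub (hgconv r h0 hr1))
      (Eventually.of_forall fun k => hqmono (s k) (r:ℝ) ⟨h0, hr1⟩ (t:ℝ) ⟨ht0, h1⟩ hrt')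
  -- the limit path
  set q : ℝ → MatSp D := fun u => if u ∈ Ico (0:ℝ) 1 then limPath g C u else 0 with hqdef
  have hqmeas' : Measurable q :=
    Measurable.ite measurableSet_Ico (limPath_measurable hCnn hgpsd) measurable_const
  have hqIco : ∀ u ∈ Ico (0:ℝ) 1, q u = limPath g C u := by
    intro u hu
    simp only [hqdef]
    rw [if_pos hu]
  -- a.e. convergence to the limit path
  obtain ⟨N, hNc, hNconv⟩ := limPath_ae_tendsto hCnn hgnorm hgpsd hgmono
    (h := fun k => qk (s k)) (fun k u hu => hqpsd (s k) u hu) (fun k => hqmono (s k))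
    (fun r h0 h1 => hgconv r h0 h1)
  have haecv : ∀ᵐ u ∂(volume.restrict (Ico (0:ℝ) 1)),
      Tendsto (fun k => qk (s k) u) atTop (𝓝 (q u)) := by
    have h1 : ∀ᵐ u ∂(volume.restrict (Ico (0:ℝ) 1)), u ∈ Ico (0:ℝ) 1 :=
      ae_restrict_mem measurableSet_Ico
    have h2 : ∀ᵐ u ∂(volume.restrict (Ico (0:ℝ) 1)), u ∉ N ∪ {(0:ℝ)} := by
      refine ae_restrict_of_ae ?_
      have hz : volume (N ∪ {(0:ℝ)}) = 0 :=
        (hNc.union (countable_singleton 0)).measure_zero _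
      rw [ae_iff]
      have hseteq : {a : ℝ | ¬ a ∉ N ∪ {(0:ℝ)}} = N ∪ {(0:ℝ)} := by
        ext a; simp [not_not]; tauto
      rw [hseteq]
      exact hz
    filter_upwards [h1, h2] with u hu hN'
    have hu0 : u ≠ 0 := fun h => hN' (Or.inr (by simp [h]))
    have huI : u ∈ Ioo (0:ℝ) 1 := ⟨lt_of_le_of_ne hu.1 (Ne.symm hu0), hu.2⟩
    have := hNconv u huI (fun hmemN => hN' (Or.inl hmemN))
    rwa [hqIco u hu]
  -- the limit path stays in K a.e.
  have haeqK : ∀ᵐ u ∂(volume.restrict (Ico (0:ℝ) 1)), q u ∈ K := by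
    have hball : ∀ᵐ u ∂(volume.restrict (Ico (0:ℝ) 1)), ∀ k, qk (s k) u ∈ K :=
      (ae_all_iff).2 fun k => haeK (s k)
    filter_upwards [haecv, hball] with u hcv hk
    exact hKc.isClosed.mem_of_tendsto hcv (Eventually.of_forall hk)
  refine ⟨Measure.map q (volume.restrict (Ico (0:ℝ) 1)),
    ⟨⟨Measure.isProbabilityMeasure_map hqmeas'.aemeasurable, ?_⟩,
      ⟨q, hqmeas', ?_, ?_, rfl⟩⟩, s, hsmono, ?_⟩
  · rw [Measure.map_apply hqmeas' hKm.compl]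
    have hset : q ⁻¹' Kᶜ = {u : ℝ | ¬ q u ∈ K} := by ext u; simp
    rw [hset, ← ae_iff]
    exact haeqK
  · intro u hu
    rw [hqIco u hu]
    exact limPath_mem_psdCone hCnn hgnorm hgpsd hgmono hu
  · intro u hu v hv huv
    rw [hqIco u hu, hqIco v hv]
    exact limPath_mono hCnn hgnorm hgpsd hgmono hu hv huv
  · -- Wasserstein convergence along the subsequence
    have hW1le : ∀ k, W1 dist (μseq (s k)) (Measure.map q (volume.restrict (Ico (0:ℝ) 1)))
        ≤ ∫ u, dist (qk (s k) u) (q u) ∂(volume.restrict (Ico (0:ℝ) 1)) := by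
      intro k
      rw [hqeq (s k)]
      exact W1_le_integral (hqmeas (s k)) hqmeas'
    have hI : Tendsto
        (fun k => ∫ u, dist (qk (s k) u) (q u) ∂(volume.restrict (Ico (0:ℝ) 1)))
        atTop (𝓝 0) := by
      have hqnorm : ∀ u ∈ Ico (0:ℝ) 1, ‖q u‖ ≤ C := by
        intro u hu
        rw [hqIco u hu]
        exact limPath_norm_le hCnn hgnorm hgpsd hgmono hu
      have hdct := tendsto_integral_of_dominated_convergence
        (μ := volume.restrict (Ico (0:ℝ) 1))
        (F := fun k u => dist (qk (s k) u) (q u)) (f := fun _ => (0:ℝ))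
        (bound := fun _ => C + C)
        (fun k => ((hqmeas (s k)).dist hqmeas').aestronglyMeasurable)
        (integrable_const _)
        (fun k => by
          filter_upwards [ae_restrict_mem measurableSet_Ico] with u hu
          rw [Real.norm_eq_abs, abs_of_nonneg dist_nonneg]
          calc dist (qk (s k) u) (q u) ≤ dist (qk (s k) u) 0 + dist 0 (q u) :=
              dist_triangle _ _ _
            _ = ‖qk (s k) u‖ + ‖q u‖ := by rw [dist_zero_right, dist_zero_left]
            _ ≤ C + C := add_le_add (hbd (s k) u hu) (hqnorm u hu))
        (by
          filter_upwards [haecv] with u hcv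
          exact tendsto_iff_dist_tendsto_zero.1 hcv)
      simpa using hdct
    exact squeeze_zero (fun k => W1_nonneg _ _) hW1le hI

end PupAux


/-- For a compact `K ⊆ S^D_+`, the set `P↑(K)` of monotone probability measures on `K`
is a closed, hence compact, subset of the probability measures on `K` equipped with the
Wasserstein-1 distance. -/
theorem Pup_isClosed_isCompact (D : ℕ) (K : Set (MatSp D))
    (hKc : IsCompact K) (hKpsd : K ⊆ psdCone D) :
    -- closedness: any Wasserstein-1 limit of monotone measures on `K` is monotone
    (∀ μseq : ℕ → Measure (MatSp D), (∀ k, μseq k ∈ Pup D K) →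
      ∀ μ : Measure (MatSp D), probOn K μ →
        Tendsto (fun k => W1 dist (μseq k) μ) atTop (nhds 0) → μ ∈ Pup D K) ∧
    -- compactness: any sequence in `P↑(K)` has a Wasserstein-1 convergent subsequence
    (∀ μseq : ℕ → Measure (MatSp D), (∀ k, μseq k ∈ Pup D K) →
      ∃ μ ∈ Pup D K, ∃ s : ℕ → ℕ, StrictMono s ∧
        Tendsto (fun k => W1 dist (μseq (s k)) μ) atTop (nhds 0)) := by
  constructor
  · intro μseq hmemseq μ hprob htend
    obtain ⟨ν, hν, s, hsmono, hW⟩ := PupAux.core D K hKc μseq hmemseq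
    haveI hμP : IsProbabilityMeasure μ := hprob.1
    haveI hνP : IsProbabilityMeasure ν := hν.1.1
    have hKm : MeasurableSet K := hKc.isClosed.measurableSet
    obtain ⟨CK0, hCK0⟩ := hKc.isBounded.exists_norm_le
    have hCK : ∀ x ∈ K, ‖x‖ ≤ max CK0 0 := fun x hx => le_trans (hCK0 x hx) (le_max_left _ _)
    have htendsub : Tendsto (fun k => W1 dist (μseq (s k)) μ) atTop (nhds 0) :=
      htend.comp hsmono.tendsto_atTop
    have hint : ∀ (target : Measure (MatSp D)), IsProbabilityMeasure target → target Kᶜ = 0 →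
        ∀ (n : ℕ) (F : Set (MatSp D)),
        Tendsto (fun k => W1 dist (μseq (s k)) target) atTop (nhds 0) →
        Tendsto (fun k => ∫ x, PupAux.testF n F x ∂(μseq (s k))) atTop
          (nhds (∫ x, PupAux.testF n F x ∂target)) := by
      intro target htP htK n F hWt
      haveI := htP
      have hchoice : ∀ k : ℕ, ∃ r : ℝ, (∃ π : Measure (MatSp D × MatSp D),
          IsProbabilityMeasure π ∧ π.map Prod.fst = μseq (s k) ∧
          π.map Prod.snd = target ∧ r = ∫ p, dist p.1 p.2 ∂π) ∧
          r < W1 dist (μseq (s k)) target + 1/((k:ℝ)+1) := by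
        intro k
        haveI := (hmemseq (s k)).1.1
        have hne : {r : ℝ | ∃ π : Measure (MatSp D × MatSp D),
            IsProbabilityMeasure π ∧ π.map Prod.fst = μseq (s k) ∧
            π.map Prod.snd = target ∧ r = ∫ p, dist p.1 p.2 ∂π}.Nonempty := by
          refine ⟨∫ p, dist p.1 p.2 ∂((μseq (s k)).prod target),
            (μseq (s k)).prod target, inferInstance, ?_, ?_, rfl⟩
          · rw [Measure.map_fst_prod]; simp
          · rw [Measure.map_snd_prod]; simp
        refine exists_lt_of_csInf_lt hne ?_
        show W1 dist (μseq (s k)) target < _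
        have hp : (0:ℝ) < 1/((k:ℝ)+1) := by positivity
        exact lt_add_of_pos_right _ hp
      choose r hrmem hrlt using hchoice
      have hrnn : ∀ k, 0 ≤ r k := by
        intro k
        obtain ⟨π, hπ, h1, h2, hreq⟩ := hrmem k
        rw [hreq]
        exact integral_nonneg fun p => dist_nonneg
      have hdiff : ∀ k, |(∫ x, PupAux.testF n F x ∂(μseq (s k)))
          - ∫ x, PupAux.testF n F x ∂target| ≤ (n:ℝ) * r k := by
        intro k
        obtain ⟨π, hπ, h1, h2, hreq⟩ := hrmem k
        have hres := PupAux.abs_integral_sub_le_of_coupling (hmemseq (s k)).1.1 htP hKm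
          (hmemseq (s k)).1.2 htK hCK (PupAux.testF_lipschitz n F)
          (PupAux.testF_abs_le_one n F) hπ h1 h2
        rw [← hreq] at hres
        simpa using hres
      have hrto : Tendsto r atTop (nhds 0) := by
        refine squeeze_zero hrnn (fun k => le_of_lt (hrlt k)) ?_
        have := hWt.add tendsto_one_div_add_atTop_nhds_zero_nat
        simpa using this
      rw [tendsto_iff_dist_tendsto_zero]
      refine squeeze_zero (g := fun k => (n:ℝ) * r k) (fun k => dist_nonneg)
        (fun k => ?_) ?_
      · rw [Real.dist_eq]
        exact hdiff k
      · have := hrto.const_mul (n:ℝ)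
        simpa using this
    have hμν : μ = ν := by
      refine PupAux.measure_ext_testF μ ν ?_
      intro F hF hFne n
      exact tendsto_nhds_unique (hint μ hμP hprob.2 n F htendsub)
        (hint ν hνP hν.1.2 n F hW)
    exact ⟨hprob, hμν ▸ hν.2⟩
  · intro μseq hmemseq
    exact PupAux.core D K hKc μseq hmemseq
end
end

section
/- Let K be a compact subset of S^D_+. A probability measure μ on K is monotone (i.e. μ = Law(q(U)) for some nondecreasing path q : [0,1) → S^D_+ and U uniform on [0,1)) if and only if the support of μ is totally ordered for the positive semidefinite order on S^D (x ≤ y iff y − x ∈ S^D_+). -/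
noncomputable section

open MeasureTheory Set Filter
open scoped ENNReal
open scoped Topology

namespace PsdAux

variable {D : ℕ}

/-- The trace. -/
def tr (D : ℕ) (x : MatSp D) : ℝ := ∑ i, x (i, i)

lemma continuous_entry (p : Fin D × Fin D) : Continuous (fun x : MatSp D => x p) :=
  (EuclideanSpace.proj p).continuous

lemma continuous_tr : Continuous (tr D) :=
  continuous_finset_sum _ fun i _ => continuous_entry (i, i)

lemma sumsingle (x : MatSp D) (a b : Fin D) (c d : ℝ) :
    ∑ k, ∑ l, (Pi.single a c : Fin D → ℝ) k * x (k, l) * (Pi.single b d : Fin D → ℝ) l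
      = c * x (a, b) * d := by
  rw [Finset.sum_eq_single a]
  · rw [Finset.sum_eq_single b]
    · simp
    · intro l _ hl; simp [Pi.single_eq_of_ne hl]
    · simp
  · intro k _ hk
    apply Finset.sum_eq_zero
    intro l _
    simp [Pi.single_eq_of_ne hk]
  · simp

lemma entry_diag_nonneg {x : MatSp D} (hx : x ∈ psdCone D) (i : Fin D) :
    0 ≤ x (i, i) := by
  have := hx.2 (Pi.single i 1)
  rwa [sumsingle x i i 1 1, one_mul, mul_one] at this

lemma tr_nonneg {x : MatSp D} (hx : x ∈ psdCone D) : 0 ≤ tr D x :=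
  Finset.sum_nonneg fun i _ => entry_diag_nonneg hx i

lemma quad_pair (x : MatSp D) (i j : Fin D) (s : ℝ) :
    ∑ k, ∑ l, (fun m => (Pi.single i (1:ℝ) : Fin D → ℝ) m + (Pi.single j s : Fin D → ℝ) m) k
      * x (k, l) *
      (fun m => (Pi.single i (1:ℝ) : Fin D → ℝ) m + (Pi.single j s : Fin D → ℝ) m) l
      = x (i, i) + s * x (j, i) + (x (i, j) * s + s * x (j, j) * s) := by
  have expand : ∀ k l : Fin D,
      ((Pi.single i (1:ℝ) : Fin D → ℝ) k + (Pi.single j s : Fin D → ℝ) k) * x (k, l) *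
      ((Pi.single i (1:ℝ) : Fin D → ℝ) l + (Pi.single j s : Fin D → ℝ) l)
      = ((Pi.single i (1:ℝ) : Fin D → ℝ) k * x (k, l) * (Pi.single i (1:ℝ) : Fin D → ℝ) l
        + (Pi.single j s : Fin D → ℝ) k * x (k, l) * (Pi.single i (1:ℝ) : Fin D → ℝ) l)
        + ((Pi.single i (1:ℝ) : Fin D → ℝ) k * x (k, l) * (Pi.single j s : Fin D → ℝ) l
        + (Pi.single j s : Fin D → ℝ) k * x (k, l) * (Pi.single j s : Fin D → ℝ) l) := by
    intro k l; ring
  simp only [expand, Finset.sum_add_distrib]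
  rw [sumsingle, sumsingle, sumsingle, sumsingle]
  ring

lemma eq_zero_of_tr_eq_zero {x : MatSp D} (hx : x ∈ psdCone D) (h : tr D x = 0) :
    x = 0 := by
  have hdiag : ∀ i, x (i, i) = 0 := by
    intro i
    have := (Finset.sum_eq_zero_iff_of_nonneg
      (fun j (_ : j ∈ Finset.univ) => entry_diag_nonneg hx j)).mp h
    exact this i (Finset.mem_univ i)
  have hoff : ∀ i j, x (i, j) = 0 := by
    intro i j
    have h1 := hx.2 (fun m => (Pi.single i (1:ℝ) : Fin D → ℝ) m
      + (Pi.single j (1:ℝ) : Fin D → ℝ) m)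
    have h2 := hx.2 (fun m => (Pi.single i (1:ℝ) : Fin D → ℝ) m
      + (Pi.single j (-1:ℝ) : Fin D → ℝ) m)
    rw [quad_pair x i j 1] at h1
    rw [quad_pair x i j (-1)] at h2
    have hsym := hx.1 i j
    rw [hdiag i, hdiag j] at h1 h2
    -- h1 : 0 ≤ 0 + 1 * x (j,i) + (x (i,j) * 1 + ...)
    nlinarith [h1, h2, hsym]
  ext p
  obtain ⟨i, j⟩ := p
  simpa using hoff i j

lemma zero_mem : (0 : MatSp D) ∈ psdCone D := by
  constructor
  · intro i j; rfl
  · intro v; simp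

lemma tr_sub (x y : MatSp D) : tr D (x - y) = tr D x - tr D y := by
  simp [tr, Finset.sum_sub_distrib]

lemma eq_of_both {x y : MatSp D} (h1 : x - y ∈ psdCone D) (h2 : y - x ∈ psdCone D) :
    x = y := by
  have e1 := tr_nonneg h1
  have e2 := tr_nonneg h2
  rw [tr_sub] at e1 e2
  have : tr D (x - y) = 0 := by rw [tr_sub]; linarith
  have := eq_zero_of_tr_eq_zero h1 this
  have := sub_eq_zero.mp this
  exact this

lemma isClosed_psdCone : IsClosed (psdCone D) := by
  have : psdCone D = (⋂ i, ⋂ j, {x : MatSp D | x (i, j) = x (j, i)}) ∩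
      ⋂ v : Fin D → ℝ, {x : MatSp D | 0 ≤ ∑ i, ∑ j, v i * x (i, j) * v j} := by
    ext x
    simp [psdCone, Set.mem_iInter, forall_and]
  rw [this]
  apply IsClosed.inter
  · exact isClosed_iInter fun i => isClosed_iInter fun j =>
      isClosed_eq (continuous_entry _) (continuous_entry _)
  · refine isClosed_iInter fun v => isClosed_le continuous_const ?_
    exact continuous_finset_sum _ fun i _ => continuous_finset_sum _ fun j _ =>
      ((continuous_const.mul (continuous_entry (i, j))).mul continuous_const)

end PsdAux

/-- The (topological) support of a measure: points all of whose open neighbourhoods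
have positive measure. -/
def msupport {α : Type*} [MeasurableSpace α] [TopologicalSpace α] (μ : Measure α) :
    Set α := {x | ∀ U : Set α, IsOpen U → x ∈ U → 0 < μ U}

namespace SuppAux

variable {α : Type*} [MeasurableSpace α] [TopologicalSpace α] {μ : Measure α}

lemma isClosed_msupport (μ : Measure α) : IsClosed (msupport μ) := by
  rw [← isOpen_compl_iff]
  rw [isOpen_iff_mem_nhds]
  intro x hx
  simp only [mem_compl_iff, msupport, mem_setOf_eq, not_forall] at hx
  obtain ⟨U, hU, hxU, hpos⟩ := hx
  have hU0 : μ U = 0 := by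
    by_contra h
    exact hpos (pos_iff_ne_zero.mpr h)
  refine Filter.mem_of_superset (hU.mem_nhds hxU) ?_
  intro y hy
  simp only [mem_compl_iff, msupport, mem_setOf_eq, not_forall]
  exact ⟨U, hU, hy, by simp [hU0]⟩

lemma msupport_subset {K : Set α} (hK : IsClosed K) (h : μ Kᶜ = 0) :
    msupport μ ⊆ K := by
  intro x hx
  by_contra hxK
  have := hx Kᶜ hK.isOpen_compl hxK
  simp [h] at this

lemma measure_compl_msupport [SecondCountableTopology α] (μ : Measure α) :
    μ (msupport μ)ᶜ = 0 := by
  have hcompl : (msupport μ)ᶜ = ⋃₀ {U : Set α | IsOpen U ∧ μ U = 0} := by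
    ext x
    simp only [mem_compl_iff, msupport, mem_setOf_eq, not_forall, mem_sUnion]
    constructor
    · rintro ⟨U, hU, hxU, hpos⟩
      exact ⟨U, ⟨hU, by by_contra h; exact hpos (pos_iff_ne_zero.mpr h)⟩, hxU⟩
    · rintro ⟨U, ⟨hU, h0⟩, hxU⟩
      exact ⟨U, hU, hxU, by simp [h0]⟩
  obtain ⟨T, hTcount, hTsub, hTeq⟩ := TopologicalSpace.isOpen_sUnion_countable
    {U : Set α | IsOpen U ∧ μ U = 0} (fun U hU => hU.1)
  rw [hcompl, ← hTeq, sUnion_eq_biUnion]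
  exact (measure_biUnion_null_iff hTcount).mpr fun U hU => (hTsub hU).2

end SuppAux

namespace FwdAux

lemma forward {D : ℕ} {μ : Measure (MatSp D)} (h : monoMeas D μ) :
    ∀ x ∈ msupport μ, ∀ y ∈ msupport μ,
      x - y ∈ psdCone D ∨ y - x ∈ psdCone D := by
  obtain ⟨q, hqm, hq0, hmono, hmap⟩ := h
  set C : Set (MatSp D) := q '' (Ico (0:ℝ) 1) with hC
  have hsub : msupport μ ⊆ closure C := by
    intro x hx
    rw [mem_closure_iff]
    intro U hU hxU
    have hpos := hx U hU hxU
    rw [hmap, Measure.map_apply hqm hU.measurableSet,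
      Measure.restrict_apply (hqm hU.measurableSet)] at hpos
    obtain ⟨u, hu⟩ := nonempty_of_measure_ne_zero hpos.ne'
    exact ⟨q u, hu.1, ⟨u, hu.2, rfl⟩⟩
  have hchain : ∀ a ∈ C, ∀ b ∈ C, a - b ∈ psdCone D ∨ b - a ∈ psdCone D := by
    rintro a ⟨u, hu, rfl⟩ b ⟨v, hv, rfl⟩
    rcases le_total v u with huv | huv
    · exact Or.inl (hmono v hv u hu huv)
    · exact Or.inr (hmono u hu v hv huv)
  intro x hx y hy
  obtain ⟨xs, hxs, hxst⟩ := mem_closure_iff_seq_limit.mp (hsub hx)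
  obtain ⟨ys, hys, hyst⟩ := mem_closure_iff_seq_limit.mp (hsub hy)
  have halt : ∀ n, xs n - ys n ∈ psdCone D ∨ ys n - xs n ∈ psdCone D :=
    fun n => hchain (xs n) (hxs n) (ys n) (hys n)
  by_cases hfreq : ∃ᶠ n in atTop, xs n - ys n ∈ psdCone D
  · left
    obtain ⟨φ, hφ, hφP⟩ := Filter.extraction_of_frequently_atTop hfreq
    have htend : Tendsto (fun n => xs (φ n) - ys (φ n)) atTop (𝓝 (x - y)) :=
      ((hxst.comp hφ.tendsto_atTop).sub (hyst.comp hφ.tendsto_atTop))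
    exact PsdAux.isClosed_psdCone.mem_of_tendsto htend (Eventually.of_forall hφP)
  · right
    rw [Filter.not_frequently] at hfreq
    have hev : ∀ᶠ n in atTop, ys n - xs n ∈ psdCone D := by
      filter_upwards [hfreq] with n hn
      exact (halt n).resolve_left hn
    obtain ⟨φ, hφ, hφP⟩ := Filter.extraction_of_frequently_atTop hev.frequently
    have htend : Tendsto (fun n => ys (φ n) - xs (φ n)) atTop (𝓝 (y - x)) :=
      ((hyst.comp hφ.tendsto_atTop).sub (hxst.comp hφ.tendsto_atTop))
    exact PsdAux.isClosed_psdCone.mem_of_tendsto htend (Eventually.of_forall hφP)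

end FwdAux

namespace QAux

variable (ν : Measure ℝ) (T : Set ℝ)

/-- CDF as a real number. -/
def F (x : ℝ) : ℝ := (ν (Iic x)).toReal

/-- Quantile function. -/
def Q (u : ℝ) : ℝ := if u < 1 then sInf {y | max u 0 < F ν y} else sSup T

variable {ν T}

section Basic

variable [IsProbabilityMeasure ν] (hTc : IsCompact T) (hTne : T.Nonempty) (hν : ν Tᶜ = 0)

lemma Fmono : Monotone (F ν) := fun x y hxy =>
  ENNReal.toReal_mono (measure_ne_top ν _) (measure_mono (Iic_subset_Iic.2 hxy))

lemma Fnonneg (x : ℝ) : 0 ≤ F ν x := ENNReal.toReal_nonneg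

lemma Fle_one (x : ℝ) : F ν x ≤ 1 := by
  have := prob_le_one (μ := ν) (s := Iic x)
  rw [F]
  calc (ν (Iic x)).toReal ≤ (1 : ℝ≥0∞).toReal :=
    ENNReal.toReal_mono (by simp) this
  _ = 1 := by simp

include hTc hTne hν

lemma F_zero {x : ℝ} (hx : x < sInf T) : F ν x = 0 := by
  have hsub : Iic x ⊆ Tᶜ := by
    intro y hy hyT
    exact absurd (csInf_le hTc.bddBelow hyT) (by simp only [mem_Iic] at hy; linarith)
  rw [F, measure_mono_null hsub hν, ENNReal.toReal_zero]

lemma F_one {x : ℝ} (hx : sSup T ≤ x) : F ν x = 1 := by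
  have hsub : (Iic x)ᶜ ⊆ Tᶜ := by
    intro y hy hyT
    have := le_csSup hTc.bddAbove hyT
    simp only [mem_compl_iff, mem_Iic, not_le] at hy
    linarith
  have h1 : ν (Iic x) = 1 := by
    have h0 : ν (Iic x)ᶜ = 0 := measure_mono_null hsub hν
    exact (prob_compl_eq_zero_iff measurableSet_Iic).mp h0
  rw [F, h1, ENNReal.toReal_one]

lemma bddBelow_set {u : ℝ} (hu : 0 ≤ u) : BddBelow {y | u < F ν y} := by
  refine ⟨sInf T, fun y hy => ?_⟩
  by_contra hlt
  push_neg at hlt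
  rw [mem_setOf_eq, F_zero hTc hTne hν hlt] at hy
  linarith

lemma nonempty_set {u : ℝ} (hu : u < 1) : {y | u < F ν y}.Nonempty :=
  ⟨sSup T, by rw [mem_setOf_eq, F_one hTc hTne hν le_rfl]; exact hu⟩

lemma Qmono : Monotone (Q ν T) := by
  intro u v huv
  rw [Q, Q]
  by_cases hv : v < 1
  · have hu : u < 1 := lt_of_le_of_lt huv hv
    rw [if_pos hu, if_pos hv]
    refine csInf_le_csInf (bddBelow_set hTc hTne hν (le_max_right u 0)) 
      (nonempty_set hTc hTne hν (by rw [max_lt_iff]; exact ⟨hv, one_pos⟩))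
      (fun y hy => ?_)
    rw [mem_setOf_eq] at hy ⊢
    exact lt_of_le_of_lt (max_le_max huv le_rfl) hy
  · rw [if_neg hv]
    by_cases hu : u < 1
    · rw [if_pos hu]
      exact csInf_le (bddBelow_set hTc hTne hν (le_max_right u 0))
        (by rw [mem_setOf_eq, F_one hTc hTne hν le_rfl, max_lt_iff]; exact ⟨hu, one_pos⟩)
    · rw [if_neg hu]

omit hTc hTne hν in
lemma rightcont {x u : ℝ} (h : ∀ n : ℕ, u < F ν (x + 1 / (n + 1))) : u ≤ F ν x := by
  have hInter : ⋂ n : ℕ, Iic (x + 1 / (n + 1)) = Iic x := by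
    ext y
    simp only [mem_iInter, mem_Iic]
    constructor
    · intro hy
      by_contra hlt
      push_neg at hlt
      obtain ⟨n, hn⟩ := exists_nat_one_div_lt (sub_pos.mpr hlt)
      have := hy n
      linarith
    · intro hy n
      have : (0:ℝ) < 1 / (n + 1) := by positivity
      linarith
  have htend : Tendsto (fun n : ℕ => ν (Iic (x + 1 / (n + 1)))) atTop (𝓝 (ν (Iic x))) := by
    rw [← hInter]
    apply tendsto_measure_iInter_atTop
      (fun n => measurableSet_Iic.nullMeasurableSet)
      (fun n m hnm => Iic_subset_Iic.2 (by
        have h1 : (1:ℝ) / (m + 1) ≤ 1 / (n + 1) := by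
          apply one_div_le_one_div_of_le (by positivity)
          exact_mod_cast add_le_add_left (Nat.cast_le.mpr hnm) 1
        linarith))
      ⟨0, measure_ne_top ν _⟩
  have htendR : Tendsto (fun n : ℕ => F ν (x + 1 / (n + 1))) atTop (𝓝 (F ν x)) :=
    (ENNReal.tendsto_toReal (measure_ne_top ν _)).comp htend
  exact ge_of_tendsto' htendR fun n => (h n).le

lemma Qmem (u : ℝ) : Q ν T u ∈ T := by
  rw [Q]
  by_cases hu : u < 1
  · rw [if_pos hu]
    set c := max u 0 with hc
    have hc0 : 0 ≤ c := le_max_right u 0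
    have hc1 : c < 1 := by rw [hc, max_lt_iff]; exact ⟨hu, one_pos⟩
    set m := sInf {y | c < F ν y} with hm
    by_contra hmT
    have hopen : IsOpen Tᶜ := hTc.isClosed.isOpen_compl
    obtain ⟨ε, hε, hball⟩ := Metric.isOpen_iff.mp hopen m hmT
    have hFeq : F ν (m + ε / 2) = F ν (m - ε / 2) := by
      have hsub2 : Ioc (m - ε / 2) (m + ε / 2) ⊆ Tᶜ := by
        intro y hy
        apply hball
        rw [Metric.mem_ball, Real.dist_eq, abs_lt]
        simp only [mem_Ioc] at hy
        constructor <;> linarith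
      have h0 : ν (Ioc (m - ε / 2) (m + ε / 2)) = 0 := measure_mono_null hsub2 hν
      have hunion : Iic (m + ε / 2) = Iic (m - ε / 2) ∪ Ioc (m - ε / 2) (m + ε / 2) :=
        (Iic_union_Ioc_eq_Iic (by linarith)).symm
      rw [F, F, hunion]
      have hle := measure_union_le (μ := ν) (Iic (m - ε / 2)) (Ioc (m - ε / 2) (m + ε / 2))
      rw [h0, add_zero] at hle
      have hge := measure_mono (μ := ν) (subset_union_left (s := Iic (m - ε / 2))
        (t := Ioc (m - ε / 2) (m + ε / 2)))
      congr 1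
      exact le_antisymm hle hge
    have hlt : m < m + ε / 2 := by linarith
    obtain ⟨y, hy, hylt⟩ := exists_lt_of_csInf_lt (nonempty_set hTc hTne hν hc1)
      (lt_of_le_of_lt (le_refl m) hlt)
    rw [mem_setOf_eq] at hy
    have : c < F ν (m - ε / 2) := by
      calc c < F ν y := hy
      _ ≤ F ν (m + ε / 2) := Fmono hylt.le
      _ = F ν (m - ε / 2) := hFeq
    have : m ≤ m - ε / 2 := csInf_le (bddBelow_set hTc hTne hν hc0) this
    linarith
  · rw [if_neg hu]
    exact hTc.sSup_mem hTne

lemma Qmeasurable : Measurable (Q ν T) := (Qmono hTc hTne hν).measurable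

lemma Qmap : Measure.map (Q ν T) (volume.restrict (Ico (0:ℝ) 1)) = ν := by
  have hQm := Qmeasurable hTc hTne hν
  haveI : IsFiniteMeasure (Measure.map (Q ν T) (volume.restrict (Ico (0:ℝ) 1))) := by
    constructor
    rw [Measure.map_apply hQm MeasurableSet.univ, preimage_univ,
      Measure.restrict_apply MeasurableSet.univ, univ_inter, Real.volume_Ico]
    simp
  apply Measure.ext_of_Iic
  intro x
  rw [Measure.map_apply hQm measurableSet_Iic,
    Measure.restrict_apply (hQm measurableSet_Iic)]
  have hsub1 : Ico (0:ℝ) (F ν x) ⊆ Q ν T ⁻¹' Iic x ∩ Ico 0 1 := by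
    intro u hu
    obtain ⟨hu0, huF⟩ := hu
    have hu1 : u < 1 := lt_of_lt_of_le huF (Fle_one x)
    constructor
    · rw [mem_preimage, mem_Iic, Q, if_pos hu1]
      apply csInf_le (bddBelow_set hTc hTne hν (le_max_right u 0))
      rw [mem_setOf_eq, max_eq_left hu0]
      exact huF
    · exact ⟨hu0, hu1⟩
  have hsub2 : Q ν T ⁻¹' Iic x ∩ Ico 0 1 ⊆ Icc 0 (F ν x) := by
    intro u hu
    obtain ⟨hQu, hu0, hu1⟩ := hu
    rw [mem_preimage, mem_Iic, Q, if_pos hu1, max_eq_left hu0] at hQu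
    refine ⟨hu0, rightcont fun n => ?_⟩
    have hlt : sInf {y | u < F ν y} < x + 1 / (n + 1) :=
      lt_of_le_of_lt hQu (by nlinarith [one_div_pos.mpr (show (0:ℝ) < n + 1 by positivity)])
    obtain ⟨y, hy, hylt⟩ := exists_lt_of_csInf_lt (nonempty_set hTc hTne hν hu1) hlt
    rw [mem_setOf_eq] at hy
    exact lt_of_lt_of_le hy (Fmono hylt.le)
  have hle1 : ENNReal.ofReal (F ν x) ≤ volume (Q ν T ⁻¹' Iic x ∩ Ico 0 1) := by
    calc ENNReal.ofReal (F ν x) = volume (Ico (0:ℝ) (F ν x)) := by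
          rw [Real.volume_Ico, sub_zero]
    _ ≤ _ := measure_mono hsub1
  have hle2 : volume (Q ν T ⁻¹' Iic x ∩ Ico 0 1) ≤ ENNReal.ofReal (F ν x) := by
    calc volume (Q ν T ⁻¹' Iic x ∩ Ico 0 1) ≤ volume (Icc (0:ℝ) (F ν x)) :=
      measure_mono hsub2
    _ = ENNReal.ofReal (F ν x) := by rw [Real.volume_Icc, sub_zero]
  rw [le_antisymm hle2 hle1, F, ENNReal.ofReal_toReal (measure_ne_top ν _)]

end Basic

end QAux

namespace BwdAux

lemma backward {D : ℕ} (K : Set (MatSp D)) (hKc : IsCompact K) (hKpsd : K ⊆ psdCone D)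
    (μ : Measure (MatSp D)) (hμ : probOn K μ)
    (hch : ∀ x ∈ msupport μ, ∀ y ∈ msupport μ,
      x - y ∈ psdCone D ∨ y - x ∈ psdCone D) :
    monoMeas D μ := by
  obtain ⟨hprob, hKnull⟩ := hμ
  set S := msupport μ with hS
  have hSclosed : IsClosed S := SuppAux.isClosed_msupport μ
  have hSK : S ⊆ K := SuppAux.msupport_subset hKc.isClosed hKnull
  have hSnull : μ Sᶜ = 0 := SuppAux.measure_compl_msupport μ
  have hScomp : IsCompact S := hKc.of_isClosed_subset hSclosed hSK
  have hSne : S.Nonempty := by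
    rw [nonempty_iff_ne_empty]
    intro h
    rw [h, compl_empty, measure_univ] at hSnull
    exact one_ne_zero hSnull
  set t := PsdAux.tr D with ht
  have htc : Continuous t := PsdAux.continuous_tr
  have htinj : InjOn t S := by
    intro x hx y hy hxy
    rcases hch x hx y hy with h | h
    · have h0 : x - y = 0 := PsdAux.eq_zero_of_tr_eq_zero h
        (by rw [PsdAux.tr_sub, ← ht, hxy, sub_self])
      exact sub_eq_zero.mp h0
    · have h0 : y - x = 0 := PsdAux.eq_zero_of_tr_eq_zero h
        (by rw [PsdAux.tr_sub, ← ht, hxy, sub_self])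
      exact (sub_eq_zero.mp h0).symm
  set T := t '' S with hT
  have hTc : IsCompact T := hScomp.image htc
  have hTne : T.Nonempty := hSne.image t
  set ν := μ.map t with hν
  haveI : IsProbabilityMeasure ν := Measure.isProbabilityMeasure_map htc.measurable.aemeasurable
  have hνT : ν Tᶜ = 0 := by
    rw [hν, Measure.map_apply htc.measurable hTc.isClosed.measurableSet.compl]
    refine measure_mono_null (fun x hx hxS => hx (mem_image_of_mem t hxS)) hSnull
  haveI : CompactSpace S := isCompact_iff_compactSpace.mp hScomp
  let ts : S → T := fun x => ⟨t x, mem_image_of_mem t x.2⟩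
  have hts_cont : Continuous ts :=
    Continuous.subtype_mk (htc.comp continuous_subtype_val) _
  have hts_bij : Function.Bijective ts := by
    constructor
    · intro x y hxy
      exact Subtype.ext (htinj x.2 y.2 (congrArg Subtype.val hxy))
    · rintro ⟨r, x, hx, rfl⟩
      exact ⟨⟨x, hx⟩, rfl⟩
  let e : S ≃ T := Equiv.ofBijective ts hts_bij
  have he_cont : Continuous e := hts_cont
  let homeo : ↥S ≃ₜ ↥T := he_cont.homeoOfEquivCompactToT2
  let g : T → MatSp D := fun r => ((homeo.symm r : S) : MatSp D)
  have hg_cont : Continuous g := continuous_subtype_val.comp homeo.symm.continuous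
  have hg_meas : Measurable g := hg_cont.measurable
  have hsymm_eq : ∀ r : T, homeo.symm r = e.symm r := fun r => rfl
  have hgt : ∀ r : T, t (g r) = (r : ℝ) := by
    intro r
    have h1 : ts (e.symm r) = r := e.apply_symm_apply r
    show t ((homeo.symm r : S) : MatSp D) = (r : ℝ)
    rw [hsymm_eq r]
    exact congrArg Subtype.val h1
  have hgS : ∀ r : T, g r ∈ S := fun r => (homeo.symm r : S).2
  have hginv : ∀ x (hx : x ∈ S), g (ts ⟨x, hx⟩) = x := by
    intro x hx
    have h1 : e.symm (ts ⟨x, hx⟩) = ⟨x, hx⟩ := e.symm_apply_apply ⟨x, hx⟩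
    show ((homeo.symm (ts ⟨x, hx⟩) : S) : MatSp D) = x
    rw [hsymm_eq]
    exact congrArg Subtype.val h1
  -- quantile
  have hQmem := QAux.Qmem (ν := ν) (T := T) hTc hTne hνT
  have hQmono := QAux.Qmono (ν := ν) (T := T) hTc hTne hνT
  have hQmeas := QAux.Qmeasurable (ν := ν) (T := T) hTc hTne hνT
  have hQmap := QAux.Qmap (ν := ν) (T := T) hTc hTne hνT
  set q : ℝ → MatSp D := fun u => g ⟨QAux.Q ν T u, hQmem u⟩ with hq
  have hq_meas : Measurable q := hg_meas.comp (hQmeas.subtype_mk)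
  have hq_mem : ∀ u, q u ∈ S := fun u => hgS _
  refine ⟨q, hq_meas, fun u _ => hKpsd (hSK (hq_mem u)), ?_, ?_⟩
  · -- monotone
    intro u hu v hv huv
    have hQuv : QAux.Q ν T u ≤ QAux.Q ν T v := hQmono huv
    rcases hch (q v) (hq_mem v) (q u) (hq_mem u) with h | h
    · exact h
    · have htr : 0 ≤ PsdAux.tr D (q u - q v) := PsdAux.tr_nonneg h
      rw [PsdAux.tr_sub] at htr
      have htu : PsdAux.tr D (q u) = QAux.Q ν T u := hgt _
      have htv : PsdAux.tr D (q v) = QAux.Q ν T v := hgt _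
      have hQeq : QAux.Q ν T u = QAux.Q ν T v := by
        rw [← htu, ← htv] at hQuv ⊢
        linarith
      have hquv : (⟨QAux.Q ν T u, hQmem u⟩ : T) = ⟨QAux.Q ν T v, hQmem v⟩ :=
        Subtype.ext hQeq
      have : q u = q v := congrArg g hquv
      rw [this, sub_self]
      exact PsdAux.zero_mem
  · -- measure identity
    have hrestr : ∀ E : Set (MatSp D), μ E = μ (E ∩ S) := by
      intro E
      refine le_antisymm ?_ (measure_mono inter_subset_left)
      calc μ E ≤ μ ((E ∩ S) ∪ Sᶜ) := measure_mono (fun x hx => by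
            by_cases hxS : x ∈ S
            · exact Or.inl ⟨hx, hxS⟩
            · exact Or.inr hxS)
      _ ≤ μ (E ∩ S) + μ Sᶜ := measure_union_le _ _
      _ = μ (E ∩ S) := by rw [hSnull, add_zero]
    have hTmeas : MeasurableSet T := hTc.isClosed.measurableSet
    refine Measure.ext fun A hA => ?_
    set B : Set ℝ := Subtype.val '' (g ⁻¹' A) with hB
    have hBmeas : MeasurableSet B :=
      (MeasurableEmbedding.subtype_coe hTmeas).measurableSet_image.mpr (hg_meas hA)
    have hBchar : ∀ r : T, (r : ℝ) ∈ B ↔ g r ∈ A := by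
      intro r
      constructor
      · rintro ⟨r', hr', heq⟩
        rwa [← Subtype.ext heq]
      · intro hr
        exact ⟨r, hr, rfl⟩
    have step1 : Measure.map q (volume.restrict (Ico (0:ℝ) 1)) A
        = ν B := by
      rw [Measure.map_apply hq_meas hA, ← hQmap,
        Measure.map_apply hQmeas hBmeas]
      congr 1
      ext u
      simp only [mem_preimage]
      exact (hBchar ⟨QAux.Q ν T u, hQmem u⟩).symm
    have step2 : ν B = μ A := by
      rw [hν, Measure.map_apply htc.measurable hBmeas]
      rw [hrestr (t ⁻¹' B), hrestr A]
      congr 1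
      ext x
      simp only [mem_inter_iff, mem_preimage, and_congr_left_iff]
      intro hxS
      have := hBchar (ts ⟨x, hxS⟩)
      rw [hginv x hxS] at this
      exact this
    rw [step1, step2]

end BwdAux

/-- A probability measure on a compact `K ⊆ S^D_+` is monotone if and only if its
support is totally ordered for the positive semidefinite order. -/
theorem monoMeas_iff_support_totally_ordered (D : ℕ) (K : Set (MatSp D))
    (hKc : IsCompact K) (hKpsd : K ⊆ psdCone D)
    (μ : Measure (MatSp D)) (hμ : probOn K μ) :
    monoMeas D μ ↔
      ∀ x ∈ msupport μ, ∀ y ∈ msupport μ,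
        x - y ∈ psdCone D ∨ y - x ∈ psdCone D :=
  ⟨FwdAux.forward, BwdAux.backward K hKc hKpsd μ hμ⟩
end
end

section
/- Let K be a compact subset of S^D_+ and P↑(K) the set of monotone probability measures on K. Then: (1) the closed convex hull of P↑(K) in (P(K), Wasserstein-1) is all of P(K); and (2) P↑(K) is an extreme set in P(K), i.e. for every Borel probability measure η on P(K), if the barycenter Bar(η) (defined by Bar(η)(A) = ∫ ν(A) dη(ν)) belongs to P↑(K) then η is supported on P↑(K). -/
noncomputable section

open MeasureTheory Set Filter
open scoped ENNReal NNReal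

open ProbabilityTheory Topology
open scoped Classical

lemma zero_mem_psdCone (D : ℕ) : (0 : MatSp D) ∈ psdCone D := by
  constructor
  · intro i j; rfl
  · intro v; simp

lemma psdCone_isClosed (D : ℕ) : IsClosed (psdCone D) := by
  have hcont : ∀ p : Fin D × Fin D, Continuous (fun x : MatSp D => x p) := by
    intro p
    exact (continuous_apply p).comp (PiLp.continuous_ofLp 2 (fun _ : Fin D × Fin D => ℝ))
  have : psdCone D = (⋂ i, ⋂ j, {x : MatSp D | x (i, j) = x (j, i)}) ∩
      (⋂ v : Fin D → ℝ, {x : MatSp D | 0 ≤ ∑ i, ∑ j, v i * x (i, j) * v j}) := by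
    ext x; simp [psdCone, Set.mem_iInter]
  rw [this]
  apply IsClosed.inter
  · apply isClosed_iInter; intro i; apply isClosed_iInter; intro j
    exact isClosed_eq (hcont _) (hcont _)
  · apply isClosed_iInter; intro v
    apply isClosed_le continuous_const
    apply continuous_finset_sum; intro i _
    apply continuous_finset_sum; intro j _
    exact (continuous_const.mul (hcont _)).mul continuous_const

/-- trace -/
def trc (D : ℕ) (x : MatSp D) : ℝ := ∑ i, x (i, i)

lemma trc_continuous (D : ℕ) : Continuous (trc D) := by
  apply continuous_finset_sum; intro i _
  exact (continuous_apply _).comp (PiLp.continuous_ofLp 2 (fun _ : Fin D × Fin D => ℝ))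

lemma diag_nonneg {D : ℕ} {z : MatSp D} (hz : z ∈ psdCone D) (i : Fin D) :
    0 ≤ z (i, i) := by
  have := hz.2 (Pi.single i 1)
  simpa [Pi.single_apply, Finset.sum_ite_eq', mul_comm] using this

lemma trc_nonneg {D : ℕ} {z : MatSp D} (hz : z ∈ psdCone D) : 0 ≤ trc D z :=
  Finset.sum_nonneg fun i _ => diag_nonneg hz i

lemma eq_zero_of_trc_eq_zero {D : ℕ} {z : MatSp D} (hz : z ∈ psdCone D)
    (h : trc D z = 0) : z = 0 := by
  have hdiag : ∀ i, z (i, i) = 0 := by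
    intro i
    have := (Finset.sum_eq_zero_iff_of_nonneg (fun i _ => diag_nonneg hz i)).mp h
    exact this i (Finset.mem_univ i)
  have hoff : ∀ i j, z (i, j) = 0 := by
    intro i j
    rcases eq_or_ne i j with rfl | hij
    · exact hdiag i
    · -- use v = single i t + single j 1
      have key : ∀ t : ℝ, 0 ≤ 2 * t * z (i, j) := by
        intro t
        have hq := hz.2 (Pi.single i t + Pi.single j 1)
        have hv : ∀ k, (Pi.single i t + Pi.single j 1 : Fin D → ℝ) k
            = if k = i then t else if k = j then 1 else 0 := by
          intro k
          rcases eq_or_ne k i with rfl | hki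
          · simp [Pi.single_apply, hij]
          · rcases eq_or_ne k j with rfl | hkj
            · simp [Pi.single_apply, hki]
            · simp [Pi.single_apply, hki, hkj]
        have hsum : ∑ a, ∑ b, (Pi.single i t + Pi.single j 1 : Fin D → ℝ) a * z (a, b) *
            (Pi.single i t + Pi.single j 1 : Fin D → ℝ) b = 2 * t * z (i, j) := by
          have hinner : ∀ a, ∑ b, (Pi.single i t + Pi.single j 1 : Fin D → ℝ) a * z (a, b) *
              (Pi.single i t + Pi.single j 1 : Fin D → ℝ) b
              = (Pi.single i t + Pi.single j 1 : Fin D → ℝ) a * z (a, i) * t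
              + (Pi.single i t + Pi.single j 1 : Fin D → ℝ) a * z (a, j) * 1 := by
            intro a
            rw [Finset.sum_eq_add_of_mem i j (Finset.mem_univ i) (Finset.mem_univ j) hij]
            · simp [hv, hij, Ne.symm hij]
            · intro c _ hc
              simp [hv, hc.1, hc.2]
          rw [Finset.sum_congr rfl (fun a _ => hinner a)]
          rw [Finset.sum_add_distrib]
          have h1 : ∑ a, (Pi.single i t + Pi.single j 1 : Fin D → ℝ) a * z (a, i) * t
              = t * z (i, i) * t + 1 * z (j, i) * t := by
            rw [Finset.sum_eq_add_of_mem i j (Finset.mem_univ i) (Finset.mem_univ j) hij]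
            · simp [hv, hij, Ne.symm hij]
            · intro c _ hc; simp [hv, hc.1, hc.2]
          have h2 : ∑ a, (Pi.single i t + Pi.single j 1 : Fin D → ℝ) a * z (a, j) * 1
              = t * z (i, j) * 1 + 1 * z (j, j) * 1 := by
            rw [Finset.sum_eq_add_of_mem i j (Finset.mem_univ i) (Finset.mem_univ j) hij]
            · simp [hv, hij, Ne.symm hij]
            · intro c _ hc; simp [hv, hc.1, hc.2]
          rw [h1, h2, hdiag i, hdiag j, hz.1 j i]
          ring
        rw [hsum] at hq
        exact hq
      have h1 := key (-(z (i, j)))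
      nlinarith [sq_nonneg (z (i,j))]
  ext p
  simpa using hoff p.1 p.2


section Quantile
variable (ρ : Measure ℝ) (C : Set ℝ)

/-- generalized inverse cdf, adjusted to be globally monotone -/
def qt : ℝ → ℝ := fun u =>
  if u < 1 then sInf {x | max u 0 < cdf ρ x} else sSup C

variable {ρ C}

lemma qt_lemmas [IsProbabilityMeasure ρ] (hC : IsCompact C) (hCne : C.Nonempty)
    (hCnull : ρ Cᶜ = 0) :
    (∀ u ∈ Ico (0:ℝ) 1, qt ρ C u ∈ C) ∧ Monotone (qt ρ C) ∧
      Measure.map (qt ρ C) (volume.restrict (Ico (0:ℝ) 1)) = ρ := by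
  obtain ⟨b, hb⟩ := hC.bddBelow
  obtain ⟨c, hc⟩ := hC.bddAbove
  set F : ℝ → ℝ := fun x => cdf ρ x with hFdef
  have hFtr : ∀ x, F x = (ρ (Iic x)).toReal := fun x => cdf_eq_real ρ x
  have hFof : ∀ x, ENNReal.ofReal (F x) = ρ (Iic x) := fun x => ofReal_cdf ρ x
  have hFmono : Monotone F := monotone_cdf ρ
  have hF0 : ∀ x, 0 ≤ F x := fun x => cdf_nonneg ρ x
  have hFle1 : ∀ x, F x ≤ 1 := fun x => cdf_le_one ρ x
  -- right continuity consequence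
  have hFrc : ∀ a u, (∀ y, a < y → u ≤ F y) → u ≤ F a := by
    intro a u h
    have ht : Tendsto F (𝓝[>] a) (𝓝 (F a)) :=
      ((cdf ρ).right_continuous a).tendsto.mono_left (nhdsWithin_mono _ Ioi_subset_Ici_self)
    exact ge_of_tendsto ht (eventually_nhdsWithin_of_forall fun y hy => h y hy)
  -- F is 1 at sSup C
  have hFtop : F (sSup C) = 1 := by
    rw [hFtr]
    have h1 : ρ (Iic (sSup C)) = 1 := by
      rw [← prob_compl_eq_zero_iff (measurableSet_Iic)]
      apply measure_mono_null _ hCnull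
      intro y hy hyC
      simp only [mem_compl_iff, mem_Iic, not_le] at hy
      exact absurd (le_csSup ⟨c, hc⟩ hyC) (not_le.2 hy)
    simp [h1]
  -- F is 0 strictly below b
  have hFbot : ∀ x, x < b → F x = 0 := by
    intro x hx
    rw [hFtr]
    have h0 : ρ (Iic x) = 0 := by
      apply measure_mono_null _ hCnull
      intro y hy hyC
      simp only [mem_Iic] at hy
      exact absurd (hb hyC) (not_le.2 (lt_of_le_of_lt hy hx))
    simp [h0]
  -- properties of the inf for thresholds in [0,1)
  have key : ∀ u ∈ Ico (0:ℝ) 1,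
      (sInf {x | u < F x} ∈ C) ∧ u ≤ F (sInf {x | u < F x}) ∧
      (∀ x, u < F x → sInf {x | u < F x} ≤ x) := by
    intro u hu
    set T := {x | u < F x} with hT
    have hTne : (sSup C) ∈ T := by
      simp only [hT, mem_setOf_eq, hFtop]; exact hu.2
    have hTbdd : BddBelow T := by
      refine ⟨b, fun x hx => ?_⟩
      by_contra hbx
      push_neg at hbx
      rw [hT, mem_setOf_eq, hFbot x hbx] at hx
      exact absurd hu.1 (not_le.2 hx)
    set a := sInf T with ha
    have hle : ∀ x, u < F x → a ≤ x := fun x hx => csInf_le hTbdd hx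
    have hlt : ∀ x, x < a → F x ≤ u := by
      intro x hx
      by_contra h
      push_neg at h
      exact absurd (hle x h) (not_le.2 hx)
    have huFa : u ≤ F a := by
      apply hFrc
      intro y hy
      obtain ⟨x, hxT, hxy⟩ := exists_lt_of_csInf_lt ⟨_, hTne⟩ (show sInf T < y from hy)
      exact le_trans (le_of_lt hxT) (hFmono hxy.le)
    have haC : a ∈ C := by
      by_contra haC
      obtain ⟨ε, hε, hball⟩ := Metric.isOpen_iff.1 hC.isClosed.isOpen_compl a haC
      rw [Real.ball_eq_Ioo] at hball
      -- F is constant on (a-ε, a+ε)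
      have hconst : F (a + ε/2) ≤ F (a - ε/2) := by
        have hmeas : ρ (Ioc (a - ε/2) (a + ε/2)) = 0 := by
          apply measure_mono_null _ hCnull
          intro y hy
          exact hball ⟨by linarith [hy.1], by linarith [hy.2]⟩
        rw [hFtr, hFtr]
        have : ρ (Iic (a + ε/2)) ≤ ρ (Iic (a - ε/2)) + ρ (Ioc (a - ε/2) (a + ε/2)) := by
          apply le_trans (measure_mono _) (measure_union_le _ _)
          intro y hy
          simp only [mem_Iic] at hy
          rcases le_or_gt y (a - ε/2) with h | h
          · exact Or.inl h
          · exact Or.inr ⟨h, hy⟩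
        rw [hmeas, add_zero] at this
        exact ENNReal.toReal_mono (measure_ne_top ρ _) this
      have h1 : F (a - ε/2) ≤ u := hlt _ (by linarith)
      obtain ⟨x, hxT, hxy⟩ := exists_lt_of_csInf_lt ⟨_, hTne⟩
        (show sInf T < a + ε/2 by rw [← ha]; linarith)
      have : u < F x := hxT
      have : F x ≤ F (a + ε/2) := hFmono hxy.le
      linarith
    exact ⟨haC, huFa, hle⟩
  -- qt is in C on [0,1)
  have hqt_lt : ∀ u : ℝ, u < 1 → qt ρ C u = sInf {x | max u 0 < F x} := by
    intro u hu; simp only [qt, if_pos hu]; rfl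
  have hqt_ge : ∀ u : ℝ, 1 ≤ u → qt ρ C u = sSup C := by
    intro u hu; simp only [qt, if_neg (not_lt.2 hu)]
  have hmem : ∀ u ∈ Ico (0:ℝ) 1, qt ρ C u ∈ C := by
    intro u hu
    rw [hqt_lt u hu.2, max_eq_left hu.1]
    exact (key u hu).1
  -- monotone
  have hmono : Monotone (qt ρ C) := by
    intro u v huv
    rcases lt_or_ge v 1 with hv | hv
    · have hu : u < 1 := lt_of_le_of_lt huv hv
      rw [hqt_lt u hu, hqt_lt v hv]
      have hvmem : max v 0 ∈ Ico (0:ℝ) 1 := ⟨le_max_right _ _, by simp [hv, hv.le]⟩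
      refine le_csInf ⟨sSup C, ?_⟩ ?_
      · show max v 0 < F (sSup C)
        rw [hFtop]; exact hvmem.2
      · intro x hx
        have humem : max u 0 ∈ Ico (0:ℝ) 1 := ⟨le_max_right _ _, by simp [hu, hu.le]⟩
        exact (key _ humem).2.2 x (lt_of_le_of_lt (max_le_max huv (le_refl 0)) hx)
    · rcases lt_or_ge u 1 with hu | hu
      · rw [hqt_lt u hu, hqt_ge v hv]
        have humem : max u 0 ∈ Ico (0:ℝ) 1 := ⟨le_max_right _ _, by simp [hu, hu.le]⟩
        exact le_csSup ⟨c, hc⟩ (key _ humem).1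
      · rw [hqt_ge u hu, hqt_ge v hv]
  have hqmeas : Measurable (qt ρ C) := hmono.measurable
  refine ⟨hmem, hmono, ?_⟩
  -- pushforward
  have : IsFiniteMeasure (Measure.map (qt ρ C) (volume.restrict (Ico (0:ℝ) 1))) := by
    constructor
    rw [Measure.map_apply hqmeas MeasurableSet.univ]
    simp [Real.volume_Ico]
  apply Measure.ext_of_Iic
  intro x
  rw [Measure.map_apply hqmeas (measurableSet_Iic),
    Measure.restrict_apply (hqmeas measurableSet_Iic)]
  have hsub1 : Ico (0:ℝ) (F x) ⊆ qt ρ C ⁻¹' Iic x ∩ Ico 0 1 := by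
    intro u hu
    have hu1 : u < 1 := lt_of_lt_of_le hu.2 (hFle1 x)
    have humem : u ∈ Ico (0:ℝ) 1 := ⟨hu.1, hu1⟩
    refine ⟨?_, humem⟩
    simp only [mem_preimage, mem_Iic]
    rw [hqt_lt u hu1, max_eq_left hu.1]
    exact (key u humem).2.2 x hu.2
  have hsub2 : qt ρ C ⁻¹' Iic x ∩ Ico 0 1 ⊆ Icc (0:ℝ) (F x) := by
    rintro u ⟨hux, hu⟩
    simp only [mem_preimage, mem_Iic] at hux
    refine ⟨hu.1, ?_⟩
    have hq : qt ρ C u = sInf {y | u < F y} := by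
      rw [hqt_lt u hu.2, max_eq_left hu.1]
    have h1 : u ≤ F (qt ρ C u) := by rw [hq]; exact (key u hu).2.1
    exact le_trans h1 (hFmono (by rw [← hq] at *; exact hux))
  have h1 := measure_mono (μ := volume) hsub1
  have h2 := measure_mono (μ := volume) hsub2
  rw [Real.volume_Ico] at h1
  rw [Real.volume_Icc] at h2
  have : volume (qt ρ C ⁻¹' Iic x ∩ Ico 0 1) = ENNReal.ofReal (F x) := by
    apply le_antisymm
    · simpa using h2
    · simpa using h1
  rw [this, hFof]

end Quantile


lemma trc_sub {D : ℕ} (x y : MatSp D) : trc D (y - x) = trc D y - trc D x := by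
  simp [trc, Finset.sum_sub_distrib]

instance volIcoProb : IsProbabilityMeasure (volume.restrict (Ico (0:ℝ) 1)) := by
  constructor
  simp [Real.volume_Ico]

lemma chain_support_mono {D : ℕ} {S : Set (MatSp D)} (hSc : IsCompact S)
    (hSpsd : S ⊆ psdCone D)
    (hchain : ∀ x ∈ S, ∀ y ∈ S, y - x ∈ psdCone D ∨ x - y ∈ psdCone D)
    {ν : Measure (MatSp D)} [hprob : IsProbabilityMeasure ν] (hν : ν Sᶜ = 0) :
    monoMeas D ν := by
  have hSclosed : IsClosed S := hSc.isClosed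
  have hSmeas : MeasurableSet S := hSclosed.measurableSet
  have hSne : S.Nonempty := by
    by_contra h
    rw [not_nonempty_iff_eq_empty] at h
    subst h
    simp only [compl_empty] at hν
    exact (one_ne_zero : (1:ℝ≥0∞) ≠ 0) (by rw [← measure_univ (μ := ν), hν])
  set f := trc D with hf
  have hfc : Continuous f := trc_continuous D
  have hfm : Measurable f := hfc.measurable
  -- order/injectivity of f on S
  have hford : ∀ x ∈ S, ∀ y ∈ S, y - x ∈ psdCone D → f x ≤ f y := by
    intro x hx y hy h
    have := trc_nonneg h
    rw [trc_sub] at this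
    linarith
  have hfinj : ∀ x ∈ S, ∀ y ∈ S, f x = f y → x = y := by
    intro x hx y hy hxy
    rcases hchain x hx y hy with h | h
    · have : trc D (y - x) = 0 := by rw [trc_sub]; linarith
      have := eq_zero_of_trc_eq_zero h this
      have := sub_eq_zero.mp this
      exact this.symm
    · have : trc D (x - y) = 0 := by rw [trc_sub]; linarith
      have := eq_zero_of_trc_eq_zero h this
      exact sub_eq_zero.mp this
  set ρ : Measure ℝ := ν.map f with hρ
  have hρprob : IsProbabilityMeasure ρ := Measure.isProbabilityMeasure_map hfm.aemeasurable
  set C : Set ℝ := f '' S with hC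
  have hCc : IsCompact C := hSc.image hfc
  have hCne : C.Nonempty := hSne.image f
  have hCnull : ρ Cᶜ = 0 := by
    rw [hρ, Measure.map_apply hfm hCc.isClosed.measurableSet.compl]
    apply measure_mono_null _ hν
    intro x hx hxS
    exact hx (mem_image_of_mem f hxS)
  obtain ⟨hmem, hmono, hmap⟩ := qt_lemmas hCc hCne hCnull
  -- the inverse map g
  have hex : ∀ y ∈ C, ∃ x, x ∈ S ∧ f x = y := by
    intro y hy; obtain ⟨x, hx, hfx⟩ := hy; exact ⟨x, hx, hfx⟩
  set g : ℝ → MatSp D := fun y =>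
    if h : ∃ x, x ∈ S ∧ f x = y then h.choose else hSne.choose with hg
  have hgS : ∀ y ∈ C, g y ∈ S ∧ f (g y) = y := by
    intro y hy
    have h : ∃ x, x ∈ S ∧ f x = y := hex y hy
    rw [hg]
    simp only [dif_pos h]
    exact ⟨h.choose_spec.1, h.choose_spec.2⟩
  have hgf : ∀ x ∈ S, g (f x) = x := by
    intro x hx
    have hy : f x ∈ C := mem_image_of_mem f hx
    obtain ⟨h1, h2⟩ := hgS (f x) hy
    exact hfinj _ h1 _ hx h2
  -- measurability of g
  have hgmeas : Measurable g := by
    apply measurable_of_isClosed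
    intro A hA
    have hkey : g ⁻¹' A = f '' (S ∩ A) ∪ (if hSne.choose ∈ A then Cᶜ else ∅) := by
      ext y
      constructor
      · intro hy
        simp only [mem_preimage] at hy
        by_cases hyC : y ∈ C
        · left
          obtain ⟨h1, h2⟩ := hgS y hyC
          exact ⟨g y, ⟨h1, hy⟩, h2⟩
        · right
          have : g y = hSne.choose := by
            rw [hg]
            have : ¬ ∃ x, x ∈ S ∧ f x = y := by
              intro ⟨x, hx, hfx⟩; exact hyC ⟨x, hx, hfx⟩
            simp only [dif_neg this]
          rw [this] at hy
          simp [hy, hyC]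
      · intro hy
        rcases hy with ⟨x, ⟨hxS, hxA⟩, rfl⟩ | hy
        · simp only [mem_preimage]
          rw [hgf x hxS]
          exact hxA
        · by_cases hch : hSne.choose ∈ A
          · rw [if_pos hch] at hy
            have : g y = hSne.choose := by
              rw [hg]
              have hne : ¬ ∃ x, x ∈ S ∧ f x = y := by
                intro ⟨x, hx, hfx⟩; exact hy ⟨x, hx, hfx⟩
              simp only [dif_neg hne]
            simp only [mem_preimage, this]
            exact hch
          · rw [if_neg hch] at hy
            exact absurd hy (notMem_empty y)
    rw [hkey]
    apply MeasurableSet.union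
    · exact ((hSc.inter_right hA).image hfc).isClosed.measurableSet
    · split_ifs
      · exact hCc.isClosed.measurableSet.compl
      · exact MeasurableSet.empty
  -- the path q
  set q : ℝ → MatSp D := g ∘ qt ρ C with hq
  have hqmeas : Measurable q := hgmeas.comp hmono.measurable
  have hqS : ∀ u ∈ Ico (0:ℝ) 1, q u ∈ S := fun u hu => (hgS _ (hmem u hu)).1
  have hqf : ∀ u ∈ Ico (0:ℝ) 1, f (q u) = qt ρ C u := fun u hu => (hgS _ (hmem u hu)).2
  refine ⟨q, hqmeas, fun u hu => hSpsd (hqS u hu), ?_, ?_⟩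
  · -- monotonicity
    intro u hu v hv huv
    rcases hchain (q u) (hqS u hu) (q v) (hqS v hv) with h | h
    · exact h
    · have h1 : f (q v) ≤ f (q u) := hford _ (hqS v hv) _ (hqS u hu) h
      rw [hqf u hu, hqf v hv] at h1
      have h2 : qt ρ C u ≤ qt ρ C v := hmono huv
      have : f (q u) = f (q v) := by rw [hqf u hu, hqf v hv]; linarith
      have := hfinj _ (hqS u hu) _ (hqS v hv) this
      rw [this, sub_self]
      exact ⟨fun i j => rfl, fun w => by simp⟩
  · -- the pushforward identity
    set μq : Measure (MatSp D) := Measure.map q (volume.restrict (Ico (0:ℝ) 1)) with hμq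
    have hμqprob : IsProbabilityMeasure μq := Measure.isProbabilityMeasure_map hqmeas.aemeasurable
    have hμqnull : μq Sᶜ = 0 := by
      rw [hμq, Measure.map_apply hqmeas hSmeas.compl,
        Measure.restrict_apply (hqmeas hSmeas.compl)]
      convert measure_empty (μ := (volume : Measure ℝ))
      ext u
      simp only [mem_inter_iff, mem_preimage, mem_compl_iff, mem_empty_iff_false, iff_false,
        not_and]
      intro h hu
      exact h (hqS u hu)
    have hfμq : μq.map f = ρ := by
      rw [hμq, Measure.map_map hfm hqmeas]
      have : Measure.map (f ∘ q) (volume.restrict (Ico (0:ℝ) 1))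
          = Measure.map (qt ρ C) (volume.restrict (Ico (0:ℝ) 1)) := by
        apply Measure.map_congr
        rw [Filter.EventuallyEq]
        rw [ae_restrict_iff' measurableSet_Ico]
        filter_upwards with u hu
        exact hqf u hu
      rw [this, hmap]
    have hfν : ν.map f = ρ := hρ.symm
    -- both measures agree on closed sets
    have hagree : ∀ (κ : Measure (MatSp D)), IsProbabilityMeasure κ → κ Sᶜ = 0 →
        κ.map f = ρ → ∀ A : Set (MatSp D), IsClosed A → κ A = ρ (f '' (S ∩ A)) := by
      intro κ hκprob hκnull hκmap A hA
      set B := f '' (S ∩ A) with hB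
      have hBmeas : MeasurableSet B :=
        ((hSc.inter_right hA).image hfc).isClosed.measurableSet
      have h2 : A ∩ S = f ⁻¹' B ∩ S := by
        ext x
        constructor
        · rintro ⟨hxA, hxS⟩
          exact ⟨⟨x, ⟨hxS, hxA⟩, rfl⟩, hxS⟩
        · rintro ⟨hxB, hxS⟩
          obtain ⟨x', ⟨hx'S, hx'A⟩, hfx'⟩ := hxB
          have := hfinj _ hx'S _ hxS hfx'
          rw [← this]
          exact ⟨hx'A, hx'S⟩
      have h1 : κ A = κ (A ∩ S) := by
        rw [← measure_inter_add_diff A hSmeas,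
          measure_mono_null (diff_subset_compl A S) hκnull, add_zero]
      have h3 : κ (f ⁻¹' B) = κ (f ⁻¹' B ∩ S) := by
        rw [← measure_inter_add_diff (f ⁻¹' B) hSmeas,
          measure_mono_null (diff_subset_compl _ S) hκnull, add_zero]
      calc κ A = κ (A ∩ S) := h1
        _ = κ (f ⁻¹' B ∩ S) := by rw [h2]
        _ = κ (f ⁻¹' B) := h3.symm
        _ = (κ.map f) B := (Measure.map_apply hfm hBmeas).symm
        _ = ρ B := by rw [hκmap]
    apply ext_of_generate_finite {s : Set (MatSp D) | IsClosed s}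
      ?_ isPiSystem_isClosed ?_ ?_
    · exact BorelSpace.measurable_eq.trans borel_eq_generateFrom_isClosed
    · intro s hs
      rw [hagree ν hprob hν hfν s hs, hagree μq hμqprob hμqnull hfμq s hs]
    · rw [measure_univ, measure_univ]


lemma dirac_mem_Pup {D : ℕ} {K : Set (MatSp D)} (hKc : IsCompact K)
    (hKpsd : K ⊆ psdCone D) {x : MatSp D} (hx : x ∈ K) :
    Measure.dirac x ∈ Pup D K := by
  refine ⟨⟨inferInstance, ?_⟩, fun _ => x, measurable_const, fun u _ => hKpsd hx,
    fun u _ v _ _ => by simpa using zero_mem_psdCone D, ?_⟩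
  · rw [Measure.dirac_apply' _ hKc.isClosed.measurableSet.compl]
    simp [hx]
  · rw [Measure.map_const, measure_univ, one_smul]

lemma part1 {D : ℕ} {K : Set (MatSp D)} (hKc : IsCompact K) (hKpsd : K ⊆ psdCone D)
    (μ : Measure (MatSp D)) (hμ : probOn K μ) (ε : ℝ) (hε : 0 < ε) :
    ∃ (m : ℕ) (c : Fin m → ℝ≥0) (ν : Fin m → Measure (MatSp D)),
      (∑ i, c i = 1) ∧ (∀ i, ν i ∈ Pup D K) ∧
      W1 dist μ (∑ i, (c i : ℝ≥0∞) • ν i) < ε := by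
  obtain ⟨hμprob, hμK⟩ := hμ
  haveI := hμprob
  have hKmeas : MeasurableSet K := hKc.isClosed.measurableSet
  have hμKone : μ K = 1 :=
    (prob_compl_eq_zero_iff₀ (μ := μ) hKmeas.nullMeasurableSet).mp hμK
  set ε' := ε/3 with hε'
  have hε'pos : 0 < ε' := by positivity
  -- finite subcover
  have hcov : K ⊆ ⋃ x ∈ K, Metric.ball x ε' :=
    fun x hx => mem_biUnion hx (Metric.mem_ball_self hε'pos)
  obtain ⟨t, htK, htfin, htcov⟩ :=
    hKc.elim_finite_subcover_image (fun x _ => Metric.isOpen_ball) hcov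
  set tF : Finset (MatSp D) := htfin.toFinset with htF
  set m : ℕ := tF.card with hm
  set e := tF.equivFin with he
  set p : Fin m → MatSp D := fun i => ((e.symm i : tF) : MatSp D) with hp
  have hpK : ∀ i, p i ∈ tF := fun i => (e.symm i).2
  have htFK : ∀ x ∈ tF, x ∈ K := by
    intro x hx
    rw [htF, Set.Finite.mem_toFinset] at hx
    exact htK hx
  -- disjointified pieces
  set B : ℕ → Set (MatSp D) := fun n =>
    if h : n < m then K ∩ Metric.ball (p ⟨n, h⟩) ε' else ∅ with hB
  have hBmeas : ∀ n, MeasurableSet (B n) := by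
    intro n
    by_cases h : n < m
    · simp only [hB, dif_pos h]
      exact hKmeas.inter Metric.isOpen_ball.measurableSet
    · simp only [hB, dif_neg h]
      exact MeasurableSet.empty
  set d : ℕ → Set (MatSp D) := disjointed B with hd
  have hdmeas : ∀ n, MeasurableSet (d n) := MeasurableSet.disjointed hBmeas
  have hddisj : Pairwise (Function.onFun Disjoint d) := disjoint_disjointed B
  have hdsub : ∀ n, d n ⊆ B n := disjointed_subset B
  have hdU : ⋃ n, d n = K := by
    rw [hd, iUnion_disjointed]
    apply Subset.antisymm
    · apply iUnion_subset
      intro n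
      by_cases h : n < m
      · simp only [hB, dif_pos h]
        exact inter_subset_left
      · simp only [hB, dif_neg h]
        exact empty_subset K
    · intro x hx
      have := htcov hx
      simp only [mem_iUnion] at this
      obtain ⟨y, hyt, hyb⟩ := this
      have hytF : y ∈ tF := by simpa [htF] using hyt
      refine mem_iUnion.2 ⟨(e ⟨y, hytF⟩ : Fin m).val, ?_⟩
      have hlt : ((e ⟨y, hytF⟩ : Fin m) : ℕ) < m := (e ⟨y, hytF⟩).2
      simp only [hB, dif_pos hlt]
      have : p ⟨(e ⟨y, hytF⟩ : Fin m).val, hlt⟩ = y := by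
        simp only [hp]
        congr 1
        simp
      rw [this]
      exact ⟨hx, hyb⟩
  have hdball : ∀ i : Fin m, d i.val ⊆ Metric.ball (p i) ε' := by
    intro i
    refine (hdsub i.val).trans ?_
    simp only [hB, dif_pos i.2]
    exact inter_subset_right.trans (by simp)
  have hdempty : ∀ n, m ≤ n → d n = ∅ := by
    intro n hn
    apply eq_empty_of_subset_empty
    refine (hdsub n).trans ?_
    simp only [hB, dif_neg (not_lt.2 hn)]
    exact subset_rfl
  -- total mass
  have hsum1 : ∑ i : Fin m, μ (d i.val) = 1 := by
    have h1 : μ (⋃ n, d n) = ∑' n, μ (d n) := measure_iUnion hddisj hdmeas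
    rw [hdU, hμKone] at h1
    have h2 : ∑' n, μ (d n) = ∑ n ∈ Finset.range m, μ (d n) := by
      apply tsum_eq_sum
      intro n hn
      rw [hdempty n (by simpa using hn)]
      exact measure_empty
    rw [h2] at h1
    rw [Fin.sum_univ_eq_sum_range (fun n => μ (d n)) m]
    exact h1.symm
  -- the approximating measure
  set c : Fin m → ℝ≥0 := fun i => (μ (d i.val)).toNNReal with hc
  set ν : Fin m → Measure (MatSp D) := fun i => Measure.dirac (p i) with hν
  have hcoe : ∀ i : Fin m, ((c i : ℝ≥0∞)) = μ (d i.val) := by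
    intro i
    rw [hc]
    exact ENNReal.coe_toNNReal (measure_ne_top μ _)
  refine ⟨m, c, ν, ?_, fun i => dirac_mem_Pup hKc hKpsd (htFK _ (hpK i)), ?_⟩
  · have : ((∑ i, c i : ℝ≥0) : ℝ≥0∞) = ((1 : ℝ≥0) : ℝ≥0∞) := by
      push_cast
      rw [Finset.sum_congr rfl (fun i _ => hcoe i)]
      simpa using hsum1
    exact_mod_cast this
  · -- the coupling
    set π : Measure (MatSp D × MatSp D) :=
      ∑ i : Fin m, Measure.map (fun x => (x, p i)) (μ.restrict (d i.val)) with hπ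
    have hpairmeas : ∀ i : Fin m, Measurable (fun x : MatSp D => (x, p i)) :=
      fun i => measurable_id.prodMk measurable_const
    have hπapp : ∀ s : Set (MatSp D × MatSp D), MeasurableSet s →
        π s = ∑ i : Fin m, μ.restrict (d i.val) ((fun x => (x, p i)) ⁻¹' s) := by
      intro s hs
      rw [hπ, Measure.finset_sum_apply]
      exact Finset.sum_congr rfl fun i _ => Measure.map_apply (hpairmeas i) hs
    have hμd_sum : ∀ s : Set (MatSp D), MeasurableSet s →
        ∑ i : Fin m, μ (s ∩ d i.val) = μ s := by
      intro s hs
      have h1 : μ (⋃ i : Fin m, (s ∩ d i.val)) = ∑' i : Fin m, μ (s ∩ d i.val) :=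
        measure_iUnion (fun i j hij => Disjoint.mono inter_subset_right inter_subset_right
          (hddisj (fun h => hij (Fin.val_injective h)))) (fun i => hs.inter (hdmeas i.val))
      rw [tsum_fintype] at h1
      have hUd : ⋃ i : Fin m, d i.val = K := by
        rw [← hdU]
        apply Subset.antisymm
        · exact iUnion_subset fun i => subset_iUnion d i.val
        · apply iUnion_subset
          intro n
          by_cases h : n < m
          · exact subset_iUnion (fun i : Fin m => d i.val) ⟨n, h⟩
          · rw [hdempty n (not_lt.1 h)]
            exact empty_subset _
      rw [← h1, ← inter_iUnion, hUd,
        ← measure_inter_add_diff s hKmeas,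
        measure_mono_null (diff_subset_compl s K) hμK, add_zero]
    have hfst : π.map Prod.fst = μ := by
      apply Measure.ext
      intro s hs
      rw [Measure.map_apply measurable_fst hs, hπapp _ (measurable_fst hs)]
      have : ∀ i : Fin m, μ.restrict (d i.val) ((fun x : MatSp D => (x, p i)) ⁻¹' (Prod.fst ⁻¹' s))
          = μ (s ∩ d i.val) := by
        intro i
        rw [Measure.restrict_apply]
        · congr 1
        · exact hs.preimage (measurable_id)
      rw [Finset.sum_congr rfl fun i _ => this i]
      exact hμd_sum s hs
    have hsnd : π.map Prod.snd = ∑ i, (c i : ℝ≥0∞) • ν i := by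
      apply Measure.ext
      intro s hs
      rw [Measure.map_apply measurable_snd hs, hπapp _ (measurable_snd hs),
        Measure.finset_sum_apply]
      apply Finset.sum_congr rfl
      intro i _
      have hpre : (fun x : MatSp D => (x, p i)) ⁻¹' (Prod.snd ⁻¹' s)
          = if p i ∈ s then univ else (∅ : Set (MatSp D)) := by
        ext x
        by_cases h : p i ∈ s <;> simp [h]
      rw [hpre, Measure.smul_apply, hν]
      simp only
      rw [Measure.dirac_apply' _ hs]
      by_cases h : p i ∈ s
      · rw [if_pos h]
        simp only [indicator_of_mem h, Pi.one_apply, smul_eq_mul, mul_one]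
        rw [Measure.restrict_apply MeasurableSet.univ, univ_inter, hcoe i]
      · rw [if_neg h]
        simp [indicator_of_notMem h]
    have hπprob : IsProbabilityMeasure π := by
      constructor
      rw [hπapp _ MeasurableSet.univ]
      simpa [Measure.restrict_apply] using hsum1
    -- the transport cost
    set r : ℝ := ∫ q, dist q.1 q.2 ∂π with hr
    have hint : ∀ i : Fin m, ∫ q, dist q.1 q.2
        ∂(Measure.map (fun x => (x, p i)) (μ.restrict (d i.val)))
        = ∫ x, dist x (p i) ∂(μ.restrict (d i.val)) := by
      intro i
      rw [integral_map (hpairmeas i).aemeasurable]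
      exact (continuous_fst.dist continuous_snd).aestronglyMeasurable
    have hbound : ∀ i : Fin m, ∫ x, dist x (p i) ∂(μ.restrict (d i.val))
        ≤ ε' * (μ (d i.val)).toReal := by
      intro i
      have hInt : Integrable (fun x => dist x (p i)) (μ.restrict (d i.val)) := by
        apply Measure.integrableOn_of_bounded (M := ε') (measure_ne_top _ _)
          ((continuous_id.dist continuous_const).aestronglyMeasurable)
        filter_upwards [ae_restrict_mem (hdmeas i.val)] with x hx
        rw [Real.norm_eq_abs, abs_of_nonneg dist_nonneg]
        exact le_of_lt (hdball i hx)
      have := integral_mono_of_nonneg (f := fun x => dist x (p i))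
        (g := fun _ => ε') (μ := μ.restrict (d i.val))
        (Filter.Eventually.of_forall fun x => dist_nonneg) (integrable_const _) ?_
      · calc ∫ x, dist x (p i) ∂(μ.restrict (d i.val)) ≤ ∫ _, ε' ∂(μ.restrict (d i.val)) := this
          _ = (μ.restrict (d i.val) univ).toReal * ε' := by
            rw [integral_const]; simp [smul_eq_mul]; exact Or.inl rfl
          _ = ε' * (μ (d i.val)).toReal := by
            rw [Measure.restrict_apply MeasurableSet.univ, univ_inter, mul_comm]
      · filter_upwards [ae_restrict_mem (hdmeas i.val)] with x hx
        exact le_of_lt (hdball i hx)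
    have hrle : r ≤ ε' := by
      rw [hr, hπ, integral_finset_sum_measure ?_]
      · calc ∑ i : Fin m, ∫ q, dist q.1 q.2
            ∂(Measure.map (fun x => (x, p i)) (μ.restrict (d i.val)))
            ≤ ∑ i : Fin m, ε' * (μ (d i.val)).toReal := by
              apply Finset.sum_le_sum
              intro i _
              rw [hint i]
              exact hbound i
          _ = ε' * ∑ i : Fin m, (μ (d i.val)).toReal := by rw [Finset.mul_sum]
          _ = ε' := by
            have : ∑ i : Fin m, (μ (d i.val)).toReal = 1 := by
              rw [← ENNReal.toReal_sum (fun i _ => measure_ne_top μ _)]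
              rw [hsum1]
              simp
            rw [this, mul_one]
      · intro i _
        rw [integrable_map_measure
          ((continuous_fst.dist continuous_snd).aestronglyMeasurable) (hpairmeas i).aemeasurable]
        simp only [Function.comp_def]
        apply Measure.integrableOn_of_bounded (M := ε') (measure_ne_top _ _)
          ((continuous_id.dist continuous_const).aestronglyMeasurable)
        filter_upwards [ae_restrict_mem (hdmeas i.val)] with x hx
        rw [Real.norm_eq_abs, abs_of_nonneg dist_nonneg]
        exact le_of_lt (hdball i hx)
    have hW1 : W1 dist μ (∑ i, (c i : ℝ≥0∞) • ν i) ≤ r := by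
      apply csInf_le
      · refine ⟨0, ?_⟩
        rintro x ⟨π', hπ'prob, _, _, rfl⟩
        exact integral_nonneg fun q => dist_nonneg
      · exact ⟨π, hπprob, hfst, hsnd, rfl⟩
    calc W1 dist μ (∑ i, (c i : ℝ≥0∞) • ν i) ≤ r := hW1
      _ ≤ ε' := hrle
      _ < ε := by rw [hε']; linarith


lemma part2 {D : ℕ} {K : Set (MatSp D)} (hKc : IsCompact K) (hKpsd : K ⊆ psdCone D)
    (η : Measure (Measure (MatSp D))) (hη : IsProbabilityMeasure η)
    (hηK : η {ν | ¬ probOn K ν} = 0) (hjoin : η.join ∈ Pup D K) :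
    η {ν | ν ∉ Pup D K} = 0 := by
  obtain ⟨⟨hjprob, hjK⟩, qb, hqbm, hqbpsd, hqbmono, hqbmap⟩ := hjoin
  have hKmeas : MeasurableSet K := hKc.isClosed.measurableSet
  set T : Set ℝ := Ico (0:ℝ) 1 ∩ qb ⁻¹' K with hT
  set S : Set (MatSp D) := closure (qb '' T) with hS
  have hSK : S ⊆ K := closure_minimal (by rintro x ⟨u, hu, rfl⟩; exact hu.2) hKc.isClosed
  have hSc : IsCompact S := hKc.of_isClosed_subset isClosed_closure hSK
  have hSmeas : MeasurableSet S := isClosed_closure.measurableSet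
  -- chain property
  have hchain0 : ∀ x ∈ qb '' T, ∀ y ∈ qb '' T,
      y - x ∈ psdCone D ∨ x - y ∈ psdCone D := by
    rintro x ⟨u, hu, rfl⟩ y ⟨v, hv, rfl⟩
    rcases le_total u v with h | h
    · exact Or.inl (hqbmono u hu.1 v hv.1 h)
    · exact Or.inr (hqbmono v hv.1 u hu.1 h)
  have hchain : ∀ x ∈ S, ∀ y ∈ S, y - x ∈ psdCone D ∨ x - y ∈ psdCone D := by
    have hPclosed : IsClosed {p : MatSp D × MatSp D |
        p.2 - p.1 ∈ psdCone D ∨ p.1 - p.2 ∈ psdCone D} := by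
      have h1 : IsClosed {p : MatSp D × MatSp D | p.2 - p.1 ∈ psdCone D} :=
        IsClosed.preimage (continuous_snd.sub continuous_fst) (psdCone_isClosed D)
      have h2 : IsClosed {p : MatSp D × MatSp D | p.1 - p.2 ∈ psdCone D} :=
        IsClosed.preimage (continuous_fst.sub continuous_snd) (psdCone_isClosed D)
      exact h1.union h2
    intro x hx y hy
    have hxy : (x, y) ∈ closure ((qb '' T) ×ˢ (qb '' T)) := by
      rw [closure_prod_eq]
      exact ⟨hx, hy⟩
    have hsub : closure ((qb '' T) ×ˢ (qb '' T)) ⊆ {p : MatSp D × MatSp D |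
        p.2 - p.1 ∈ psdCone D ∨ p.1 - p.2 ∈ psdCone D} := by
      apply closure_minimal _ hPclosed
      rintro ⟨x', y'⟩ ⟨hx', hy'⟩
      exact hchain0 x' hx' y' hy'
    exact hsub hxy
  -- join gives null mass outside S
  have hjS : η.join Sᶜ = 0 := by
    rw [hqbmap, Measure.map_apply hqbm hSmeas.compl,
      Measure.restrict_apply (hqbm hSmeas.compl)]
    have hsub : qb ⁻¹' Sᶜ ∩ Ico (0:ℝ) 1 ⊆ qb ⁻¹' Kᶜ ∩ Ico (0:ℝ) 1 := by
      rintro u ⟨hu1, hu2⟩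
      refine ⟨?_, hu2⟩
      intro huK
      exact hu1 (subset_closure ⟨u, ⟨hu2, huK⟩, rfl⟩)
    apply measure_mono_null hsub
    have := hjK
    rw [hqbmap, Measure.map_apply hqbm hKmeas.compl,
      Measure.restrict_apply (hqbm hKmeas.compl)] at this
    exact this
  have hae : ∀ᵐ ν ∂η, ν Sᶜ = 0 := by
    rw [Measure.join_apply hSmeas.compl] at hjS
    have hmeas : Measurable fun ν : Measure (MatSp D) => ν Sᶜ :=
      Measure.measurable_coe hSmeas.compl
    rw [lintegral_eq_zero_iff hmeas] at hjS
    filter_upwards [hjS] with ν hν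
    exact hν
  have h2 : η {ν : Measure (MatSp D) | ¬ ν Sᶜ = 0} = 0 := by
    rw [← ae_iff] at *
    exact hae
  refine measure_mono_null (t := {ν : Measure (MatSp D) | ¬ probOn K ν}
    ∪ {ν : Measure (MatSp D) | ¬ ν Sᶜ = 0}) ?_ (measure_union_null hηK h2)
  intro ν hν
  by_contra h
  simp only [mem_union, mem_setOf_eq, not_or, not_not] at h
  obtain ⟨hprob, hSnull⟩ := h
  haveI := hprob.1
  exact hν ⟨hprob, chain_support_mono hSc (hSK.trans hKpsd) hchain hSnull⟩


/-- (1) The closed convex hull of `P↑(K)` in the Wasserstein-1 space of probability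
measures on `K` is all of `P(K)`: every probability measure on `K` is a Wasserstein-1
limit of finite convex combinations of monotone measures.
(2) `P↑(K)` is an extreme set in `P(K)`: if a probability measure `η` on `P(K)` has
barycenter `Bar(η) = η.join` in `P↑(K)`, then `η` is supported on `P↑(K)`. -/
theorem Pup_closedConvexHull_and_extreme (D : ℕ) (K : Set (MatSp D))
    (hKc : IsCompact K) (hKpsd : K ⊆ psdCone D) :
    (∀ μ : Measure (MatSp D), probOn K μ → ∀ ε : ℝ, 0 < ε →
      ∃ (m : ℕ) (c : Fin m → ℝ≥0) (ν : Fin m → Measure (MatSp D)),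
        (∑ i, c i = 1) ∧ (∀ i, ν i ∈ Pup D K) ∧
        W1 dist μ (∑ i, (c i : ℝ≥0∞) • ν i) < ε) ∧
    (∀ η : Measure (Measure (MatSp D)), IsProbabilityMeasure η →
      η {ν | ¬ probOn K ν} = 0 → η.join ∈ Pup D K → η {ν | ν ∉ Pup D K} = 0) := by
  constructor
  · exact fun μ hμ ε hε => part1 hKc hKpsd μ hμ ε hε
  · exact fun η hη hηK hjoin => part2 hKc hKpsd η hη hηK hjoin
end
end
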